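/- arXiv:1203.0347 — 13 statements merged into one kernel-verified Lean document; each statement's English description precedes it below -/
import Mathlib

section
/- Let C be an n×n matrix over a commutative ring, and for indices i ≠ j let C_{i;j} denote the matrix obtained by deleting row i and column j, and C_{i,j;i,j} the matrix obtained by deleting rows i,j and columns i,j. Then det(C)·det(C_{i,j;i,j}) = det(C_{i;i})·det(C_{j;j}) − det(C_{i;j})·det(C_{j;i}). -/
open Matrix

section Aux

open Equiv Finset

variable {R : Type*} [CommRing R] {m : Type*} [DecidableEq m] [Fintype m]

lemma perm_eq_one_or_swap {m : Type*} [DecidableEq m] (σ : Equiv.Perm m) (i j : m)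
    (hij : i ≠ j) (h : ∀ c, σ c = c ∨ σ c = i ∨ σ c = j) :
    σ = 1 ∨ σ = Equiv.swap i j := by
  have hi' : σ i = i ∨ σ i = j := by
    rcases h i with h' | h' | h'
    · exact Or.inl h'
    · exact Or.inl h'
    · exact Or.inr h'
  rcases hi' with hii | hii
  · -- σ i = i, show σ = 1
    left
    have hjj : σ j = j := by
      rcases h j with h' | h' | h'
      · exact h'
      · exact absurd (σ.injective (h'.trans hii.symm)) hij.symm
      · exact h'
    ext c
    simp only [Equiv.Perm.coe_one, id_eq]
    rcases h c with h' | h' | h'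
    · exact h'
    · exact (σ.injective (h'.trans hii.symm)) ▸ h'
    · exact (σ.injective (h'.trans hjj.symm)) ▸ h'
  · -- σ i = j
    right
    have hji : σ j = i := by
      rcases h j with h' | h' | h'
      · exact absurd (σ.injective (hii.trans h'.symm)) hij
      · exact h'
      · exact absurd (σ.injective (hii.trans h'.symm)) hij
    ext c
    rcases eq_or_ne c i with rfl | hci
    · rw [hii, Equiv.swap_apply_left]
    rcases eq_or_ne c j with rfl | hcj
    · rw [hji, Equiv.swap_apply_right]
    rw [Equiv.swap_apply_of_ne_of_ne hci hcj]
    rcases h c with h' | h' | h'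
    · exact h'
    · exact absurd (σ.injective (h'.trans hji.symm)) hcj
    · exact absurd (σ.injective (h'.trans hii.symm)) hci

/-- Determinant of the identity matrix with rows `i ≠ j` replaced by `u`, `v`. -/
lemma det_one_updateRow_updateRow (u v : m → R) {i j : m} (hij : i ≠ j) :
    det (((1 : Matrix m m R).updateRow i u).updateRow j v) = u i * v j - u j * v i := by
  set M := ((1 : Matrix m m R).updateRow i u).updateRow j v with hM
  have hMrow : ∀ r c, M r c = if r = j then v c else if r = i then u c else
      if r = c then 1 else 0 := by
    intro r c
    simp [hM, updateRow_apply, Matrix.one_apply]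
  rw [det_apply']
  have hone_ne : (1 : Equiv.Perm m) ≠ Equiv.swap i j := by
    intro h
    have := congrArg (fun σ : Equiv.Perm m => σ i) h
    simp [Equiv.swap_apply_left] at this
    exact hij this
  have hsub : ({1, Equiv.swap i j} : Finset (Perm m)) ⊆ Finset.univ := Finset.subset_univ _
  rw [← Finset.sum_subset hsub ?vanish]
  case vanish =>
    intro σ _ hσ
    simp only [Finset.mem_insert, Finset.mem_singleton] at hσ
    push_neg at hσ
    obtain ⟨hσ1, hσ2⟩ := hσ
    have hex : ∃ c, σ c ≠ c ∧ σ c ≠ i ∧ σ c ≠ j := by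
      by_contra hcon
      push_neg at hcon
      have hmem : ∀ c, σ c = c ∨ σ c = i ∨ σ c = j := by
        intro c
        rcases eq_or_ne (σ c) c with h1 | h1
        · exact Or.inl h1
        rcases eq_or_ne (σ c) i with h2 | h2
        · exact Or.inr (Or.inl h2)
        · exact Or.inr (Or.inr (hcon c h1 h2))
      rcases perm_eq_one_or_swap σ i j hij hmem with h | h
      · exact hσ1 h
      · exact hσ2 h
    obtain ⟨c, hc, hci, hcj⟩ := hex
    have hz : M (σ c) c = 0 := by
      rw [hMrow]
      simp [hci, hcj, hc]
    rw [show (∏ x, M (σ x) x) = 0 from Finset.prod_eq_zero (Finset.mem_univ c) hz, mul_zero]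
  · rw [Finset.sum_insert (by simpa using hone_ne), Finset.sum_singleton]
    have h1 : ∏ c, M ((1 : Perm m) c) c = u i * v j := by
      simp only [Perm.one_apply]
      rw [← Finset.prod_subset (Finset.subset_univ {i, j}) (fun c _ hc => ?_)]
      · rw [Finset.prod_insert (by simp [hij]), Finset.prod_singleton, hMrow, hMrow]
        simp [hij]
      · rw [hMrow]
        simp only [Finset.mem_insert, Finset.mem_singleton] at hc
        push_neg at hc
        simp [hc.1, hc.2]
    have h2 : ∏ c, M (Equiv.swap i j c) c = u j * v i := by
      rw [← Finset.prod_subset (Finset.subset_univ {i, j}) (fun c _ hc => ?_)]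
      · rw [Finset.prod_insert (by simp [hij]), Finset.prod_singleton,
          Equiv.swap_apply_left, Equiv.swap_apply_right, hMrow, hMrow]
        simp [hij, hij.symm, mul_comm]
      · simp only [Finset.mem_insert, Finset.mem_singleton] at hc
        push_neg at hc
        rw [Equiv.swap_apply_of_ne_of_ne hc.1 hc.2, hMrow]
        simp [hc.1, hc.2]
    rw [h1, h2]
    simp [Equiv.Perm.sign_swap hij]
    ring

end Aux

section Key

variable {R : Type*} [CommRing R] {n : ℕ}

lemma updateRow_updateRow_comm (A : Matrix (Fin (n + 2)) (Fin (n + 2)) R)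
    {i j : Fin (n + 2)} (hij : i ≠ j) (u v : Fin (n + 2) → R) :
    (A.updateRow i u).updateRow j v = (A.updateRow j v).updateRow i u := by
  ext a b
  by_cases hai : a = i <;> by_cases haj : a = j <;>
    simp_all [Matrix.updateRow_apply]

/-- The Lewis Carroll identity multiplied through by `det C`; valid over any commutative ring. -/
lemma lewis_carroll_mul (C : Matrix (Fin (n + 2)) (Fin (n + 2)) R) (i j : Fin (n + 2))
    (k : Fin (n + 1)) (hk : i.succAbove k = j) :
    C.det * (C.det *
      (C.submatrix (i.succAbove ∘ k.succAbove) (i.succAbove ∘ k.succAbove)).det) =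
    C.det * ((C.submatrix i.succAbove i.succAbove).det * (C.submatrix j.succAbove j.succAbove).det -
      (C.submatrix i.succAbove j.succAbove).det * (C.submatrix j.succAbove i.succAbove).det) := by
  have hij : i ≠ j := by rw [← hk]; exact (Fin.succAbove_ne i k).symm
  -- The matrix D: identity with rows i, j replaced by adjugate rows
  set D := (((1 : Matrix (Fin (n+2)) (Fin (n+2)) R).updateRow i (adjugate C i)).updateRow j
      (adjugate C j)) with hD
  have hDC : D * C = (C.updateRow i (Pi.single i C.det)).updateRow j (Pi.single j C.det) := by
    ext a b
    rw [mul_apply]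
    by_cases haj : a = j
    · subst haj
      have h1 : ∀ x, D a x = adjugate C a x := fun x => by rw [hD, updateRow_self]
      simp only [h1]
      have h2 : ∑ x, adjugate C a x * C x b = (adjugate C * C) a b := (mul_apply).symm
      rw [h2, adjugate_mul, updateRow_self, Matrix.smul_apply, Matrix.one_apply, smul_eq_mul,
        Pi.single_apply]
      rcases eq_or_ne a b with rfl | hb
      · simp
      · simp [hb, Ne.symm hb]
    by_cases hai : a = i
    · subst hai
      have h1 : ∀ x, D a x = adjugate C a x := fun x => by
        rw [hD, updateRow_ne haj, updateRow_self]
      simp only [h1]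
      have h2 : ∑ x, adjugate C a x * C x b = (adjugate C * C) a b := (mul_apply).symm
      rw [h2, adjugate_mul, updateRow_ne haj, updateRow_self, Matrix.smul_apply, Matrix.one_apply,
        smul_eq_mul, Pi.single_apply]
      rcases eq_or_ne a b with rfl | hb
      · simp
      · simp [hb, Ne.symm hb]
    · have h1 : ∀ x, D a x = if a = x then 1 else 0 := fun x => by
        rw [hD, updateRow_ne haj, updateRow_ne hai, Matrix.one_apply]
      simp only [h1]
      rw [updateRow_ne haj, updateRow_ne hai]
      rw [Finset.sum_eq_single a (fun x _ hx => by rw [if_neg (Ne.symm hx), zero_mul])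
        (fun h => absurd (Finset.mem_univ a) h)]
      rw [if_pos rfl, one_mul]
  -- determinant of D
  have hdetD : D.det = adjugate C i i * adjugate C j j - adjugate C i j * adjugate C j i :=
    det_one_updateRow_updateRow _ _ hij
  -- determinant of D * C computed directly
  have hsingle : ∀ (a : Fin (n+2)), (Pi.single a C.det : Fin (n+2) → R) = C.det • (Pi.single a 1 : Fin (n+2) → R) := by
    intro a; ext b; simp [Pi.single_apply]
  have hdetE : ((C.updateRow i (Pi.single i C.det)).updateRow j (Pi.single j C.det)).det =
      C.det * (C.det *
        (C.submatrix (i.succAbove ∘ k.succAbove) (i.succAbove ∘ k.succAbove)).det) := by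
    rw [hsingle j, det_updateRow_smul, updateRow_updateRow_comm _ hij _ _, hsingle i, det_updateRow_smul]
    congr 1
    congr 1
    -- det ((C.updateRow j (single j 1)).updateRow i (single i 1)) = double minor
    have h1 : ((C.updateRow j (Pi.single j 1)).updateRow i (Pi.single i 1)).det =
        adjugate (C.updateRow j (Pi.single j 1)) i i := (adjugate_apply _ _ _).symm
    rw [h1, adjugate_fin_succ_eq_det_submatrix]
    have hsgn : ((-1 : R)) ^ ((i : ℕ) + i) = 1 := by
      rw [← two_mul, pow_mul]; simp
    rw [hsgn, one_mul]
    have h2 : (C.updateRow j (Pi.single j 1)).submatrix i.succAbove i.succAbove =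
        (C.submatrix i.succAbove i.succAbove).updateRow k (Pi.single k 1) := by
      ext a b
      simp only [submatrix_apply, updateRow_apply]
      rcases eq_or_ne a k with rfl | hak
      · rw [if_pos hk, if_pos rfl]
        simp only [Pi.single_apply]
        congr 1
        simp only [eq_iff_iff]
        constructor
        · intro h; exact Fin.succAbove_right_injective (h.trans hk.symm)
        · rintro rfl; exact hk
      · rw [if_neg (fun h => hak (Fin.succAbove_right_injective (h.trans hk.symm))),
          if_neg hak]
    rw [h2]
    have h3 : ((C.submatrix i.succAbove i.succAbove).updateRow k (Pi.single k 1)).det =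
        adjugate (C.submatrix i.succAbove i.succAbove) k k := (adjugate_apply _ _ _).symm
    rw [h3, adjugate_fin_succ_eq_det_submatrix]
    have hsgn2 : ((-1 : R)) ^ ((k : ℕ) + k) = 1 := by
      rw [← two_mul, pow_mul]; simp
    rw [hsgn2, one_mul, submatrix_submatrix]
  calc C.det * (C.det *
      (C.submatrix (i.succAbove ∘ k.succAbove) (i.succAbove ∘ k.succAbove)).det)
      = ((C.updateRow i (Pi.single i C.det)).updateRow j (Pi.single j C.det)).det := hdetE.symm
    _ = (D * C).det := by rw [hDC]
    _ = D.det * C.det := det_mul _ _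
    _ = C.det * D.det := mul_comm _ _
    _ = _ := by
        rw [hdetD]
        congr 1
        rw [adjugate_fin_succ_eq_det_submatrix, adjugate_fin_succ_eq_det_submatrix,
          adjugate_fin_succ_eq_det_submatrix, adjugate_fin_succ_eq_det_submatrix]
        have e1 : ((-1 : R)) ^ ((i : ℕ) + i) = 1 := by rw [← two_mul, pow_mul]; simp
        have e2 : ((-1 : R)) ^ ((j : ℕ) + j) = 1 := by rw [← two_mul, pow_mul]; simp
        have e3 : ((-1 : R)) ^ ((j : ℕ) + i) * ((-1 : R)) ^ ((i : ℕ) + j) = 1 := by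
          rw [← pow_add]
          exact Even.neg_one_pow ⟨(i : ℕ) + j, by omega⟩
        rw [e1, e2, one_mul, one_mul]
        congr 1
        calc (-1 : R) ^ ((j : ℕ) + i) * (C.submatrix j.succAbove i.succAbove).det *
              ((-1 : R) ^ ((i : ℕ) + j) * (C.submatrix i.succAbove j.succAbove).det)
            = ((-1 : R) ^ ((j : ℕ) + i) * (-1 : R) ^ ((i : ℕ) + j)) *
              ((C.submatrix i.succAbove j.succAbove).det *
                (C.submatrix j.succAbove i.succAbove).det) := by ring
          _ = (C.submatrix i.succAbove j.succAbove).det *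
                (C.submatrix j.succAbove i.succAbove).det := by rw [e3, one_mul]

/-- The identity over an integral domain, by cancelling `det C` when it is nonzero —
here stated only for the generic matrix. -/
lemma lewis_carroll_of_domain {S : Type*} [CommRing S] [IsDomain S]
    (C : Matrix (Fin (n + 2)) (Fin (n + 2)) S) (hC : C.det ≠ 0) (i j : Fin (n + 2))
    (k : Fin (n + 1)) (hk : i.succAbove k = j) :
    C.det * (C.submatrix (i.succAbove ∘ k.succAbove) (i.succAbove ∘ k.succAbove)).det =
      (C.submatrix i.succAbove i.succAbove).det * (C.submatrix j.succAbove j.succAbove).det -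
      (C.submatrix i.succAbove j.succAbove).det * (C.submatrix j.succAbove i.succAbove).det :=
  mul_left_cancel₀ hC (lewis_carroll_mul C i j k hk)

end Key

/-- The Lewis Carroll (Desnanot–Jacobi) identity. For an `(n+2)×(n+2)` matrix `C`
over a commutative ring and two distinct indices `i` and `j = i.succAbove k`,
deleting row `a` and column `b` is realized by `C.submatrix a.succAbove b.succAbove`,
and deleting the rows and columns `i, j` by
`C.submatrix (i.succAbove ∘ k.succAbove) (i.succAbove ∘ k.succAbove)`. -/
theorem lewis_carroll_identity {R : Type*} [CommRing R] {n : ℕ}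
    (C : Matrix (Fin (n + 2)) (Fin (n + 2)) R) (i j : Fin (n + 2))
    (k : Fin (n + 1)) (hk : i.succAbove k = j) :
    C.det * (C.submatrix (i.succAbove ∘ k.succAbove) (i.succAbove ∘ k.succAbove)).det =
      (C.submatrix i.succAbove i.succAbove).det * (C.submatrix j.succAbove j.succAbove).det -
      (C.submatrix i.succAbove j.succAbove).det * (C.submatrix j.succAbove i.succAbove).det := by
  let C' := mvPolynomialX (Fin (n+2)) (Fin (n+2)) ℤ
  let φ : MvPolynomial (Fin (n+2) × Fin (n+2)) ℤ →+* R :=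
    (MvPolynomial.eval₂Hom (Int.castRingHom R) fun p : Fin (n+2) × Fin (n+2) => C p.1 p.2)
  have hmap : C'.map φ = C := mvPolynomialX_map_eval₂ _ _
  have key := lewis_carroll_of_domain C' (det_mvPolynomialX_ne_zero _ _) i j k hk
  have := congrArg φ key
  simpa only [_root_.map_mul, _root_.map_sub, RingHom.map_det, ← submatrix_map, hmap, RingHom.mapMatrix_apply] using this
end

section
/- For a sequence q_1,...,q_n in a ring and 1 ≤ s < n, the modified continuant satisfies [q_1,...,q_n; h, s] = [q_1,...,q_{s-1}]·h·[q_{s+2},...,q_n] + [q_1,...,q_s]·[q_{s+1},...,q_n]. -/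
/-- Auxiliary continuant on the reversed list:
`contAux [qₙ,...,q₁] = [q₁,...,qₙ]`. -/
def contAux {R : Type*} [Ring R] : List R → R
  | [] => 1
  | [q] => q
  | q :: r :: t => contAux (r :: t) * q + contAux t

/-- The continuant `[q₁,...,qₙ]` of a sequence. -/
def cont {R : Type*} [Ring R] (l : List R) : R := contAux l.reverse

/-- Auxiliary modified continuant on the reversed list:
`mcontAux h s [qₙ,...,q₁] = [q₁,...,qₙ; h, s]`. -/
def mcontAux {R : Type*} [Ring R] (h : R) (s : ℕ) : List R → R
  | [] => 1
  | q :: t =>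
    if s ≥ t.length + 1 then contAux (q :: t)
    else if s = t.length then contAux t * q + contAux t.tail * h
    else mcontAux h s t * q + mcontAux h s t.tail
  termination_by l => l.length
  decreasing_by
  · simp
  · simp [List.length_tail] <;> omega

/-- The modified continuant `[q₁,...,qₙ; h, s]`, equal to `[q₁,...,qₙ]` if `s ≥ n`,
to `[q₁,...,qₙ₋₁] qₙ + [q₁,...,qₙ₋₂] h` if `s = n - 1`, and to
`[q₁,...,qₙ₋₁; h, s] qₙ + [q₁,...,qₙ₋₂; h, s]` if `s < n - 1`. -/
def mcont {R : Type*} [Ring R] (h : R) (s : ℕ) (l : List R) : R := mcontAux h s l.reverse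

lemma dropLast_drop_comm {α : Type*} (l : List α) (k : ℕ) :
    (l.drop k).dropLast = l.dropLast.drop k := by
  rw [List.dropLast_eq_take, List.dropLast_eq_take, List.drop_take, List.length_drop]
  congr 1; omega

lemma dropLast_take {α : Type*} (l : List α) (k : ℕ) (hk : k ≤ l.length - 1) :
    l.dropLast.take k = l.take k := by
  rw [List.dropLast_eq_take, List.take_take, Nat.min_eq_left hk]

lemma cont_nil {R : Type*} [Ring R] : (cont ([] : List R)) = 1 := rfl

lemma cont_singleton {R : Type*} [Ring R] (q : R) : cont [q] = q := rfl

lemma cont_pair {R : Type*} [Ring R] (a q : R) : cont [a, q] = a * q + 1 := by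
  simp [cont, contAux]

lemma cont_concat {R : Type*} [Ring R] (m : List R) (q : R) (hm : m ≠ []) :
    cont (m ++ [q]) = cont m * q + cont m.dropLast := by
  obtain ⟨r, t, ht⟩ : ∃ r t, m.reverse = r :: t := by
    cases hr : m.reverse with
    | nil => exact absurd (by simpa using hr) hm
    | cons r t => exact ⟨r, t, rfl⟩
  have htail : m.dropLast.reverse = t := by rw [← List.tail_reverse, ht]; rfl
  simp only [cont, List.reverse_append, List.reverse_singleton, List.singleton_append, ht, htail]
  rfl

lemma mcont_of_le {R : Type*} [Ring R] (h : R) (s : ℕ) (l : List R) (hl : l.length ≤ s) :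
    mcont h s l = cont l := by
  cases hr : l.reverse with
  | nil => rw [mcont, cont, hr]; simp [mcontAux, contAux]
  | cons q t =>
    have hlen : t.length + 1 = l.length := by
      have := congrArg List.length hr; simpa using this.symm
    rw [mcont, cont, hr, mcontAux, if_pos (by omega)]

lemma mcont_concat_eq {R : Type*} [Ring R] (h : R) (s : ℕ) (m : List R) (q : R)
    (hm : m.length = s) :
    mcont h s (m ++ [q]) = cont m * q + cont m.dropLast * h := by
  have hrev : (m ++ [q]).reverse = q :: m.reverse := by simp
  rw [mcont, hrev, mcontAux, if_neg (by simp [hm]), if_pos (by simp [hm]),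
    List.tail_reverse]
  rfl

lemma mcont_concat_lt {R : Type*} [Ring R] (h : R) (s : ℕ) (m : List R) (q : R)
    (hm : s < m.length) :
    mcont h s (m ++ [q]) = mcont h s m * q + mcont h s m.dropLast := by
  have hrev : (m ++ [q]).reverse = q :: m.reverse := by simp
  rw [mcont, hrev, mcontAux, if_neg (by simp; omega), if_neg (by simp; omega),
    List.tail_reverse]
  rfl

/-- `[q₁,...,qₙ; h, s] = [q₁,...,q_{s-1}] h [q_{s+2},...,qₙ] + [q₁,...,q_s][q_{s+1},...,qₙ]`. -/
theorem mcont_cutting {R : Type*} [Ring R] (h : R) (s : ℕ) (l : List R)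
    (hs1 : 1 ≤ s) (hs2 : s < l.length) :
    mcont h s l =
      cont (l.take (s - 1)) * h * cont (l.drop (s + 1)) +
        cont (l.take s) * cont (l.drop s) := by
  suffices H : ∀ n (l : List R), l.length ≤ n → s < l.length →
      mcont h s l =
        cont (l.take (s - 1)) * h * cont (l.drop (s + 1)) +
          cont (l.take s) * cont (l.drop s) from H l.length l le_rfl hs2
  intro n
  induction n with
  | zero => intro l h1 h2; omega
  | succ n ih =>
    intro l hlen hlt
    obtain hl | ⟨m, q, hl⟩ := List.eq_nil_or_concat l
    · subst hl; simp at hlt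
    rw [List.concat_eq_append] at hl
    subst hl
    have hml : (m ++ [q]).length = m.length + 1 := by simp
    rcases eq_or_lt_of_le (Nat.lt_succ_iff.mp (hml ▸ hlt)) with heq | hsm
    · -- s = m.length
      rw [mcont_concat_eq h s m q heq.symm,
        List.take_append_of_le_length (by omega),
        List.take_append_of_le_length (by omega)]
      have h1 : (m ++ [q]).drop (s + 1) = [] := by
        apply List.drop_eq_nil_of_le; simp; omega
      have h2 : (m ++ [q]).drop s = [q] := by
        rw [List.drop_append_of_le_length (by omega), List.drop_of_length_le (by omega)]
        rfl
      rw [h1, h2, cont_nil, cont_singleton]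
      subst heq
      rw [List.take_length, List.dropLast_eq_take]
      noncomm_ring
    · -- s < m.length
      rw [mcont_concat_lt h s m q hsm,
        List.take_append_of_le_length (by omega),
        List.take_append_of_le_length (by omega),
        List.drop_append_of_le_length (by omega),
        List.drop_append_of_le_length (by omega)]
      rcases eq_or_lt_of_le (show s + 1 ≤ m.length from hsm) with heq1 | hs1m
      · -- s + 1 = m.length
        obtain hm0 | ⟨m', a, hm'⟩ := List.eq_nil_or_concat m
        · subst hm0; simp at hsm
        rw [List.concat_eq_append] at hm'
        subst hm'
        have hm'len : m'.length = s := by simpa using heq1.symm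
        rw [mcont_concat_eq h s m' a hm'len, List.dropLast_concat,
          mcont_of_le h s m' (le_of_eq hm'len),
          List.take_append_of_le_length (by omega),
          List.take_append_of_le_length (by omega),
          List.take_of_length_le (le_of_eq hm'len)]
        have hd1 : (m' ++ [a]).drop (s + 1) = [] := by
          apply List.drop_eq_nil_of_le; simp; omega
        have hd2 : (m' ++ [a]).drop s = [a] := by
          rw [List.drop_append_of_le_length (by omega), List.drop_of_length_le (by omega)]
          rfl
        rw [hd1, hd2, List.nil_append, cont_singleton, List.singleton_append, cont_pair,
          List.dropLast_eq_take, hm'len]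
        noncomm_ring
      · -- s + 1 < m.length
        have e1 := ih m (by omega) hsm
        have e2 := ih m.dropLast (by rw [List.length_dropLast]; omega)
          (by rw [List.length_dropLast]; omega)
        rw [dropLast_take m (s - 1) (by omega), dropLast_take m s (by omega),
          ← dropLast_drop_comm, ← dropLast_drop_comm] at e2
        rw [e1, e2,
          cont_concat (m.drop (s + 1)) q (by simp [List.drop_eq_nil_iff]; omega),
          cont_concat (m.drop s) q (by simp [List.drop_eq_nil_iff]; omega)]
        noncomm_ring
end

section
/- In a commutative ring, the modified continuant [q_1,...,q_n; h, s] equals the determinant of the tridiagonal n×n matrix A with diagonal entries a_{i,i} = q_i, superdiagonal entries a_{i,i+1} = 1, subdiagonal entry a_{s+1,s} = −h, and all other subdiagonal entries a_{i+1,i} = −1. -/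
open Matrix

namespace McontDet

variable {R : Type*} [CommRing R]

/-- Entry of the generic tridiagonal matrix, as a function of natural-number indices. -/
def tent (d b : ℕ → R) (i j : ℕ) : R :=
  if i = j then d i else if j = i + 1 then 1 else if i = j + 1 then b j else 0

lemma tent_diag (d b : ℕ → R) (i : ℕ) : tent d b i i = d i := if_pos rfl

lemma tent_super (d b : ℕ → R) (i : ℕ) : tent d b i (i + 1) = 1 := by
  unfold tent; rw [if_neg (by omega), if_pos rfl]

lemma tent_sub (d b : ℕ → R) (j : ℕ) : tent d b (j + 1) j = b j := by
  unfold tent; rw [if_neg (by omega), if_neg (by omega), if_pos rfl]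

lemma tent_zero (d b : ℕ → R) {i j : ℕ} (h1 : i ≠ j) (h2 : j ≠ i + 1) (h3 : i ≠ j + 1) :
    tent d b i j = 0 := by
  unfold tent; rw [if_neg h1, if_neg h2, if_neg h3]

/-- Generic tridiagonal matrix. -/
def trid (d b : ℕ → R) (n : ℕ) : Matrix (Fin n) (Fin n) R :=
  Matrix.of fun i j => tent d b (i : ℕ) (j : ℕ)

lemma trid_apply (d b : ℕ → R) (n : ℕ) (i j : Fin n) :
    trid d b n i j = tent d b (i : ℕ) (j : ℕ) := rfl

lemma coe_succAbove {n : ℕ} (p : Fin (n + 1)) (j : Fin n) :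
    ((p.succAbove j : Fin (n + 1)) : ℕ) = if (j : ℕ) < (p : ℕ) then (j : ℕ) else (j : ℕ) + 1 := by
  rcases lt_or_ge ((j : ℕ)) ((p : ℕ)) with hlt | hge
  · rw [Fin.succAbove_of_castSucc_lt _ _ (by rwa [Fin.lt_def, Fin.coe_castSucc]),
      if_pos hlt, Fin.coe_castSucc]
  · rw [Fin.succAbove_of_le_castSucc _ _ (by rwa [Fin.le_def, Fin.coe_castSucc]),
      if_neg (by omega), Fin.val_succ]

lemma det_trid_zero (d b : ℕ → R) : (trid d b 0).det = 1 := Matrix.det_fin_zero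

lemma det_trid_one (d b : ℕ → R) : (trid d b 1).det = d 0 := by
  rw [Matrix.det_fin_one]; exact tent_diag d b 0

lemma det_trid_succ_succ (d b : ℕ → R) (n : ℕ) :
    (trid d b (n + 2)).det =
      (trid d b (n + 1)).det * d (n + 1) - b n * (trid d b n).det := by
  set A := trid d b (n + 2) with hA
  have hent : ∀ j : Fin (n + 2), A (Fin.last (n + 1)) j = tent d b (n + 1) (j : ℕ) := fun j => rfl
  rw [Matrix.det_succ_row A (Fin.last (n + 1))]
  have hne : (⟨n, by omega⟩ : Fin (n + 2)) ≠ ⟨n + 1, by omega⟩ := by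
    simp [Fin.ext_iff]
  rw [Finset.sum_eq_add (⟨n, by omega⟩ : Fin (n + 2)) (⟨n + 1, by omega⟩ : Fin (n + 2)) hne
    (fun c _ hc => by
      have hc1 : (c : ℕ) ≠ n := fun hh => hc.1 (Fin.ext hh)
      have hc2 : (c : ℕ) ≠ n + 1 := fun hh => hc.2 (Fin.ext hh)
      have hz : A (Fin.last (n + 1)) c = 0 := by
        rw [hent]
        exact tent_zero d b (by omega) (by have := c.isLt; omega) (by omega)
      rw [hz]; ring)
    (fun hj => absurd (Finset.mem_univ _) hj) (fun hj => absurd (Finset.mem_univ _) hj)]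
  have e₁ : A (Fin.last (n + 1)) ⟨n, by omega⟩ = b n := by
    rw [hent]; exact tent_sub d b n
  have e₂ : A (Fin.last (n + 1)) ⟨n + 1, by omega⟩ = d (n + 1) := by
    rw [hent]; exact tent_diag d b (n + 1)
  -- the minor at (last, n+1) is trid d b (n+1)
  have m₂ : A.submatrix (Fin.last (n + 1)).succAbove
      (⟨n + 1, by omega⟩ : Fin (n + 2)).succAbove = trid d b (n + 1) := by
    ext i j
    have hi : (((Fin.last (n + 1)).succAbove i : Fin (n + 2)) : ℕ) = (i : ℕ) := by
      rw [coe_succAbove, if_pos]; exact i.isLt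
    have hj : (((⟨n + 1, by omega⟩ : Fin (n + 2)).succAbove j : Fin (n + 2)) : ℕ) = (j : ℕ) := by
      rw [coe_succAbove, if_pos]; exact j.isLt
    rw [Matrix.submatrix_apply, trid_apply, hA, trid_apply, hi, hj]
  -- the minor at (last, n)
  have m₁ : (A.submatrix (Fin.last (n + 1)).succAbove
      (⟨n, by omega⟩ : Fin (n + 2)).succAbove).det = (trid d b n).det := by
    set B := A.submatrix (Fin.last (n + 1)).succAbove
      (⟨n, by omega⟩ : Fin (n + 2)).succAbove with hB
    have hBent : ∀ i j : Fin (n + 1), B i j =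
        tent d b (i : ℕ) (if (j : ℕ) < n then (j : ℕ) else (j : ℕ) + 1) := by
      intro i j
      have hi : (((Fin.last (n + 1)).succAbove i : Fin (n + 2)) : ℕ) = (i : ℕ) := by
        rw [coe_succAbove, if_pos]; exact i.isLt
      have hj : (((⟨n, by omega⟩ : Fin (n + 2)).succAbove j : Fin (n + 2)) : ℕ) =
          if (j : ℕ) < n then (j : ℕ) else (j : ℕ) + 1 := coe_succAbove _ _
      rw [hB, Matrix.submatrix_apply, hA, trid_apply, hi, hj]
    rw [Matrix.det_succ_column B (Fin.last n)]
    rw [Fintype.sum_eq_single (Fin.last n) (fun c hc => by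
      have hcv : (c : ℕ) < n := by
        have h1 : (c : ℕ) ≠ n := fun hh => hc (Fin.ext (by simp [hh]))
        have := c.isLt; omega
      have hz : B c (Fin.last n) = 0 := by
        rw [hBent]
        simp only [Fin.val_last]
        rw [if_neg (by omega)]
        exact tent_zero d b (by omega) (by omega) (by omega)
      rw [hz]; ring)]
    have eB : B (Fin.last n) (Fin.last n) = 1 := by
      rw [hBent]
      simp only [Fin.val_last]
      rw [if_neg (by omega)]
      exact tent_super d b n
    have mB : B.submatrix (Fin.last n).succAbove (Fin.last n).succAbove = trid d b n := by
      ext i j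
      have hi : (((Fin.last n).succAbove i : Fin (n + 1)) : ℕ) = (i : ℕ) := by
        rw [coe_succAbove, if_pos]; exact i.isLt
      have hj : (((Fin.last n).succAbove j : Fin (n + 1)) : ℕ) = (j : ℕ) := by
        rw [coe_succAbove, if_pos]; exact j.isLt
      rw [Matrix.submatrix_apply, hBent, trid_apply, hi, hj, if_pos (by omega)]
    rw [eB, mB]
    have hs : (-1 : R) ^ ((Fin.last n : ℕ) + (Fin.last n : ℕ)) = 1 := by
      simp only [Fin.val_last, ← two_mul, pow_mul, neg_one_sq, one_pow]
    rw [hs]; ring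
  rw [e₁, e₂, m₁, m₂]
  have s₁ : (-1 : R) ^ ((Fin.last (n + 1) : ℕ) + ((⟨n, by omega⟩ : Fin (n + 2)) : ℕ)) = -1 := by
    show (-1 : R) ^ (n + 1 + n) = -1
    have hh : n + 1 + n = 2 * n + 1 := by omega
    rw [hh, pow_succ, pow_mul, neg_one_sq, one_pow, one_mul]
  have s₂ : (-1 : R) ^ ((Fin.last (n + 1) : ℕ) + ((⟨n + 1, by omega⟩ : Fin (n + 2)) : ℕ)) = 1 := by
    show (-1 : R) ^ (n + 1 + (n + 1)) = 1
    have hh : n + 1 + (n + 1) = 2 * (n + 1) := by omega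
    rw [hh, pow_mul, neg_one_sq, one_pow]
  rw [s₁, s₂]
  ring

/-- The reversed list `[d (n-1), ..., d 1, d 0]`. -/
def revList (d : ℕ → R) : ℕ → List R
  | 0 => []
  | n + 1 => d n :: revList d n

lemma revList_length (d : ℕ → R) (n : ℕ) : (revList d n).length = n := by
  induction n with
  | zero => rfl
  | succ n ih => simp [revList, ih]

lemma contAux_rev_zero (d : ℕ → R) : contAux (revList d 0) = 1 := rfl
lemma contAux_rev_one (d : ℕ → R) : contAux (revList d 1) = d 0 := rfl

lemma contAux_rev_succ_succ (d : ℕ → R) (n : ℕ) :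
    contAux (revList d (n + 2)) =
      contAux (revList d (n + 1)) * d (n + 1) + contAux (revList d n) := rfl

lemma det_trid_eq_contAux (d : ℕ → R) (b : ℕ → R) (s : ℕ)
    (hb : ∀ j, j + 1 ≠ s → b j = -1) :
    ∀ n, n ≤ s → (trid d b n).det = contAux (revList d n) := by
  intro n
  induction n using Nat.strong_induction_on with
  | _ n ih =>
    match n with
    | 0 => intro _; rw [det_trid_zero, contAux_rev_zero]
    | 1 => intro _; rw [det_trid_one, contAux_rev_one]
    | (k + 2) =>
      intro hn
      rw [det_trid_succ_succ, contAux_rev_succ_succ,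
        ih (k + 1) (by omega) (by omega), ih k (by omega) (by omega),
        hb k (by omega)]
      ring

lemma mcontAux_rev_le (h : R) (s : ℕ) (d : ℕ → R) (n : ℕ) (hn : n ≤ s) :
    mcontAux h s (revList d n) = contAux (revList d n) := by
  match n with
  | 0 => show mcontAux h s [] = contAux []; rw [mcontAux]; rfl
  | k + 1 =>
    show mcontAux h s (d k :: revList d k) = _
    rw [mcontAux]
    rw [if_pos (by rw [revList_length]; omega)]
    rfl

lemma det_trid_eq_mcontAux (h : R) (s : ℕ) (hs : 1 ≤ s) (d : ℕ → R)
    (b : ℕ → R) (hb : ∀ j, j + 1 ≠ s → b j = -1) (hbs : b (s - 1) = -h) :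
    ∀ n, (trid d b n).det = mcontAux h s (revList d n) := by
  intro n
  induction n using Nat.strong_induction_on with
  | _ n ih =>
    rcases lt_trichotomy n (s + 1) with hlt | heq | hgt
    · rw [det_trid_eq_contAux d b s hb n (by omega), mcontAux_rev_le h s d n (by omega)]
    · subst heq
      obtain ⟨t, rfl⟩ : ∃ t, s = t + 1 := ⟨s - 1, by omega⟩
      rw [det_trid_succ_succ]
      show _ = mcontAux h (t + 1) (d (t + 1) :: revList d (t + 1))
      rw [mcontAux]
      rw [if_neg (by rw [revList_length]; omega), if_pos (by rw [revList_length])]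
      rw [det_trid_eq_contAux d b (t + 1) hb (t + 1) le_rfl,
        det_trid_eq_contAux d b (t + 1) hb t (by omega)]
      have hbt : b t = -h := by simpa using hbs
      have htl : (revList d (t + 1)).tail = revList d t := rfl
      rw [htl, hbt]
      ring
    · obtain ⟨k, rfl⟩ : ∃ k, n = k + 2 := ⟨n - 2, by omega⟩
      rw [det_trid_succ_succ]
      show _ = mcontAux h s (d (k + 1) :: revList d (k + 1))
      rw [mcontAux]
      rw [if_neg (by rw [revList_length]; omega), if_neg (by rw [revList_length]; omega)]
      have htl : (revList d (k + 1)).tail = revList d k := rfl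
      rw [htl, ih (k + 1) (by omega), ih k (by omega), hb k (by omega)]
      ring

lemma ofFn_reverse_eq_revList (d : ℕ → R) (n : ℕ) :
    (List.ofFn fun i : Fin n => d (i : ℕ)).reverse = revList d n := by
  induction n with
  | zero => rfl
  | succ n ih =>
    rw [List.ofFn_succ']
    show ((List.ofFn fun i : Fin n => d (i : ℕ)).concat (d n)).reverse = _
    rw [List.concat_eq_append, List.reverse_append, ih]
    rfl

end McontDet


/-- In a commutative ring, `[q₁,...,qₙ; h, s]` (with `1 ≤ s < n`) is the determinant of
the tridiagonal matrix with diagonal `q₁,...,qₙ`, superdiagonal entries `1`,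
subdiagonal entry `-h` in (1-based) position `(s+1, s)` and `-1` elsewhere on the
subdiagonal. Indices here are 0-based, so the `-h` sits at row `s`, column `s-1`. -/
theorem mcont_eq_det_tridiagonal {R : Type*} [CommRing R] {n : ℕ} (q : Fin n → R)
    (h : R) (s : ℕ) (hs1 : 1 ≤ s) (hs2 : s < n) :
    mcont h s (List.ofFn q) =
      (Matrix.of fun i j : Fin n =>
        if i = j then q i
        else if (j : ℕ) = (i : ℕ) + 1 then 1
        else if (i : ℕ) = (j : ℕ) + 1 then (if (i : ℕ) = s then -h else -1)
        else 0).det := by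
  classical
  set d : ℕ → R := fun i => if hi : i < n then q ⟨i, hi⟩ else 0 with hd
  set b : ℕ → R := fun j => if j + 1 = s then -h else -1 with hbdef
  have hq : (List.ofFn q) = List.ofFn fun i : Fin n => d (i : ℕ) := by
    congr 1
    funext i
    simp [hd, i.isLt]
  have hM : (Matrix.of fun i j : Fin n =>
        if i = j then q i
        else if (j : ℕ) = (i : ℕ) + 1 then 1
        else if (i : ℕ) = (j : ℕ) + 1 then (if (i : ℕ) = s then -h else -1)
        else 0) = McontDet.trid d b n := by
    ext i j
    rw [Matrix.of_apply, McontDet.trid_apply]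
    unfold McontDet.tent
    by_cases h1 : (i : ℕ) = (j : ℕ)
    · rw [if_pos (Fin.ext h1), if_pos h1]
      show q i = if hi : (i : ℕ) < n then q ⟨(i : ℕ), hi⟩ else 0
      rw [dif_pos i.isLt]
    · rw [if_neg (fun hh => h1 (congrArg Fin.val hh)), if_neg h1]
      by_cases h2 : (j : ℕ) = (i : ℕ) + 1
      · rw [if_pos h2, if_pos h2]
      · rw [if_neg h2, if_neg h2]
        by_cases h3 : (i : ℕ) = (j : ℕ) + 1
        · rw [if_pos h3, if_pos h3]
          show _ = if (j : ℕ) + 1 = s then -h else -1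
          by_cases h4 : (i : ℕ) = s
          · rw [if_pos h4, if_pos (by omega)]
          · rw [if_neg h4, if_neg (by omega)]
        · rw [if_neg h3, if_neg h3]
  rw [hM, mcont, hq, McontDet.ofFn_reverse_eq_revList,
    McontDet.det_trid_eq_mcontAux h s hs1 d b
      (fun j hj => by show (if j + 1 = s then -h else -1) = -1; exact if_neg hj)
      (by show (if s - 1 + 1 = s then -h else -1) = -h; exact if_pos (by omega)) n]
end

section
/- Let R be a commutative ring and Q(x,y) = x² + gxy + hy². If x, y, u, v ∈ R satisfy xu + yv = 1, then Q(x,y)·Q(v − ug, u) = Q(xv − xug − yuh, 1). In particular, if x and y generate the unit ideal, then Q(x,y) divides Q(z,1) for some z ∈ R. -/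
/-- If `x u + y v = 1` in a commutative ring, then with `Q(x,y) = x² + gxy + hy²` we have
`Q(x,y)·Q(v − ug, u) = Q(xv − xug − yuh, 1)`; in particular if `x` and `y` generate the
unit ideal then `Q(x,y)` divides `Q(z,1)` for some `z`. -/
theorem form_product_identity {R : Type*} [CommRing R] (g h x y u v : R)
    (huv : x * u + y * v = 1) :
    (x ^ 2 + g * x * y + h * y ^ 2) *
        ((v - u * g) ^ 2 + g * (v - u * g) * u + h * u ^ 2) =
      (x * v - x * u * g - y * u * h) ^ 2 +
        g * (x * v - x * u * g - y * u * h) * 1 + h * 1 ^ 2 ∧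
    ∃ z : R, (x ^ 2 + g * x * y + h * y ^ 2) ∣ (z ^ 2 + g * z * 1 + h * 1 ^ 2) := by
  have key : (x ^ 2 + g * x * y + h * y ^ 2) *
        ((v - u * g) ^ 2 + g * (v - u * g) * u + h * u ^ 2) =
      (x * v - x * u * g - y * u * h) ^ 2 +
        g * (x * v - x * u * g - y * u * h) * 1 + h * 1 ^ 2 := by
    linear_combination (g * (x * v - x * u * g - y * u * h) +
      h * (x * u + y * v + 1)) * huv
  exact ⟨key, ⟨x * v - x * u * g - y * u * h, _, key.symm⟩⟩
end

section
/- Let F be a field of characteristic different from 2, and let −h ∈ F be a nonzero element that is not a square in F. If a polynomial m ∈ F[X] divides z² + h t² for coprime polynomials z, t ∈ F[X], then m is an associate of x² + h y² for some coprime polynomials x, y ∈ F[X]. -/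
open Polynomial

lemma repaux_irr {F : Type*} [Field F] (h : F) (hns : ¬∃ k : F, k ^ 2 = -h) :
    Irreducible (X ^ 2 + C h : F[X]) := by
  have hm : (X ^ 2 + C h : F[X]).Monic :=
    monic_X_pow_add (by simpa using degree_C_le.trans_lt (by norm_num))
  have hd : (X ^ 2 + C h : F[X]).natDegree = 2 := natDegree_X_pow_add_C
  rw [hm.irreducible_iff_roots_eq_zero_of_degree_le_three (by omega) (by omega)]
  by_contra hne
  obtain ⟨a, ha⟩ := Multiset.exists_mem_of_ne_zero hne
  rw [mem_roots hm.ne_zero] at ha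
  have : a ^ 2 + h = 0 := by simpa [IsRoot] using ha
  exact hns ⟨a, eq_neg_of_add_eq_zero_left this⟩

/-- Over a field `F` of characteristic ≠ 2, if `-h ∈ F` is nonzero and not a square,
and `m ∈ F[X]` divides `z² + h t²` with `z, t` coprime, then `m` is an associate of
`x² + h y²` for some coprime `x, y ∈ F[X]`. -/
theorem rep_of_dvd_nonsquare {F : Type*} [Field F] (hchar : ringChar F ≠ 2)
    (h : F) (hh0 : -h ≠ 0) (hns : ¬∃ k : F, k ^ 2 = -h)
    (m z t : F[X]) (hzt : IsCoprime z t) (hdvd : m ∣ z ^ 2 + C h * t ^ 2) :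
    ∃ x y : F[X], IsCoprime x y ∧ Associated m (x ^ 2 + C h * y ^ 2) := by
  classical
  have h2F : (2 : F) ≠ 0 := Ring.two_ne_zero hchar
  have hP : Irreducible (X ^ 2 + C h : F[X]) := repaux_irr h hns
  haveI : Fact (Irreducible (X ^ 2 + C h : F[X])) := ⟨hP⟩
  set K := AdjoinRoot (X ^ 2 + C h : F[X]) with hK
  set f : F →+* K := AdjoinRoot.of _ with hf
  set r : K := AdjoinRoot.root _ with hr
  have hPm : (X ^ 2 + C h : F[X]).Monic :=
    monic_X_pow_add (by simpa using degree_C_le.trans_lt (by norm_num))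
  have hfinj : Function.Injective f := f.injective
  have hr2 : r ^ 2 = -f h := by
    have h0 : AdjoinRoot.mk (X ^ 2 + C h : F[X]) (X ^ 2 + C h) = 0 := AdjoinRoot.mk_self
    rw [map_add, map_pow, AdjoinRoot.mk_X, AdjoinRoot.mk_C] at h0
    linear_combination h0
  have hr0 : r ≠ 0 := by
    intro e
    apply hh0
    have : f (-h) = 0 := by rw [map_neg, ← hr2, e]; ring
    simpa using hfinj (by simpa using this)
  -- independence of 1, r over F
  have indep : ∀ a b : F, f a + f b * r = 0 → a = 0 ∧ b = 0 := by
    intro a b hab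
    by_cases hb : b = 0
    · subst hb
      simp only [map_zero, zero_mul, add_zero] at hab
      exact ⟨hfinj (by simpa using hab), rfl⟩
    · exfalso
      have hfb : f b ≠ 0 := fun e => hb (hfinj (by simpa using e))
      have hre : r = f (-(a / b)) := by
        rw [map_neg, map_div₀, ← neg_div, eq_div_iff hfb]
        linear_combination hab
      apply hns
      refine ⟨-(a / b), hfinj ?_⟩
      rw [map_pow, ← hre, hr2, map_neg]
  -- decomposition of K
  have decompK : ∀ k : K, ∃ a b : F, k = f a + f b * r := by
    intro k
    obtain ⟨q, rfl⟩ := AdjoinRoot.mk_surjective k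
    refine ⟨(q %ₘ (X ^ 2 + C h)).coeff 0, (q %ₘ (X ^ 2 + C h)).coeff 1, ?_⟩
    have hq : AdjoinRoot.mk (X ^ 2 + C h : F[X]) q
        = AdjoinRoot.mk _ (q %ₘ (X ^ 2 + C h)) := by
      rw [modByMonic_eq_sub_mul_div _ _, map_sub, map_mul, AdjoinRoot.mk_self, zero_mul,
        sub_zero]
    have hdeg : (q %ₘ (X ^ 2 + C h : F[X])).degree ≤ 1 := by
      have h2 := degree_modByMonic_lt q hPm
      have : (X ^ 2 + C h : F[X]).degree = 2 := by
        rw [degree_eq_natDegree hPm.ne_zero, natDegree_X_pow_add_C]; rfl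
      rw [this] at h2
      exact Order.le_of_lt_succ (by exact_mod_cast h2)
    rw [hq]
    conv_lhs => rw [eq_X_add_C_of_degree_le_one hdeg]
    rw [map_add, map_mul, AdjoinRoot.mk_X, AdjoinRoot.mk_C, AdjoinRoot.mk_C]
    ring
  -- conjugation on K
  have hev : (X ^ 2 + C h : F[X]).eval₂ f (-r) = 0 := by
    simp only [eval₂_add, eval₂_pow, eval₂_X, eval₂_C]
    rw [neg_pow, hr2]; ring
  set σK : K →+* K := AdjoinRoot.lift f (-r) hev with hσK
  have σK_of : ∀ a : F, σK (f a) = f a := fun a => AdjoinRoot.lift_of hev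
  have σK_r : σK r = -r := AdjoinRoot.lift_root hev
  have σK_inv : ∀ k : K, σK (σK k) = k := by
    intro k
    obtain ⟨a, b, rfl⟩ := decompK k
    simp [map_add, map_mul, σK_of, σK_r]
    exact Or.inl (neg_neg r)
  -- polynomial level maps
  set ι : F[X] →+* K[X] := mapRingHom f with hι
  set σ : K[X] →+* K[X] := mapRingHom σK with hσ
  have ιinj : Function.Injective ι := map_injective f hfinj
  have σι : ∀ q : F[X], σ (ι q) = ι q := by
    intro q; ext n
    simp [hσ, hι, coe_mapRingHom, coeff_map, σK_of]
  have σσ : ∀ q : K[X], σ (σ q) = q := by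
    intro q; ext n
    simp [hσ, coe_mapRingHom, coeff_map, σK_inv]
  have σC : σ (C r) = -C r := by
    simp only [hσ, coe_mapRingHom, map_C, σK_r, C_neg]
  -- decomposition of K[X]
  have decomp : ∀ q : K[X], ∃ x y : F[X], q = ι x + C r * ι y := by
    intro q
    choose A B hAB using decompK
    refine ⟨∑ i ∈ q.support, C (A (q.coeff i)) * X ^ i,
            ∑ i ∈ q.support, C (B (q.coeff i)) * X ^ i, ?_⟩
    have key : ∀ (Cf : K → F) (n : ℕ),
        ((∑ i ∈ q.support, C (Cf (q.coeff i)) * X ^ i : F[X])).coeff n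
          = if n ∈ q.support then Cf (q.coeff n) else 0 := by
      intro Cf n
      rw [finset_sum_coeff]
      simp only [coeff_C_mul, coeff_X_pow, mul_ite, mul_one, mul_zero]
      exact Finset.sum_ite_eq q.support n (fun i => Cf (q.coeff i))
    ext n
    simp only [hι, coe_mapRingHom, coeff_add, coeff_map, coeff_C_mul, key]
    by_cases hn : n ∈ q.support
    · simp only [hn, if_true]
      rw [mul_comm (r : K)]
      exact hAB (q.coeff n)
    · simp only [hn, if_false, map_zero, mul_zero, add_zero]
      exact notMem_support_iff.mp hn
  have normEq : ∀ x y : F[X],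
      (ι x + C r * ι y) * (ι x - C r * ι y) = ι (x ^ 2 + C h * y ^ 2) := by
    intro x y
    have h1 : (C r : K[X]) ^ 2 = -ι (C h) := by
      rw [← C_pow, hr2, hι, coe_mapRingHom, map_C, C_neg]
    have h2 : ι (x ^ 2 + C h * y ^ 2) = ι x ^ 2 + ι (C h) * ι y ^ 2 := by
      simp only [map_add, map_mul, map_pow]
    rw [h2]
    linear_combination (-(ι y ^ 2) : K[X]) * h1
  have σdecomp : ∀ x y : F[X], σ (ι x + C r * ι y) = ι x - C r * ι y := by
    intro x y
    rw [map_add, map_mul, σι, σι, σC]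
    ring
  -- zero lemma
  have zero_lem : ∀ x y : F[X], ι x + C r * ι y = 0 → x = 0 ∧ y = 0 := by
    intro x y hxy
    have hc : ∀ n, x.coeff n = 0 ∧ y.coeff n = 0 := by
      intro n
      have h0 := congrArg (fun q : K[X] => q.coeff n) hxy
      simp only [hι, coe_mapRingHom, coeff_add, coeff_map, coeff_C_mul, coeff_zero] at h0
      exact indep _ _ (by linear_combination h0)
    exact ⟨Polynomial.ext fun n => (hc n).1, Polynomial.ext fun n => (hc n).2⟩
  -- m is nonzero
  have hm0 : m ≠ 0 := by
    rintro rfl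
    have h0 : z ^ 2 + C h * t ^ 2 = 0 := zero_dvd_iff.mp hdvd
    have h1 : (ι z + C r * ι t) * (ι z - C r * ι t) = 0 := by
      rw [normEq, h0, map_zero]
    rcases mul_eq_zero.mp h1 with h2 | h2
    · obtain ⟨rfl, rfl⟩ := zero_lem z t h2
      exact not_isCoprime_zero_zero hzt
    · have h3 : ι z + C r * ι (-t) = 0 := by rw [map_neg]; linear_combination h2
      obtain ⟨rfl, h4⟩ := zero_lem z (-t) h3
      rw [neg_eq_zero] at h4
      rw [h4] at hzt
      exact not_isCoprime_zero_zero hzt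
  -- main argument in K[X]
  set M : K[X] := ι m with hM
  set Z : K[X] := ι z + C r * ι t with hZ
  have hσZ : σ Z = ι z - C r * ι t := σdecomp z t
  have hMZ : M ∣ Z * σ Z := by
    rw [hσZ, hZ, normEq]
    exact _root_.map_dvd ι hdvd
  have hM0 : M ≠ 0 := fun e => hm0 (ιinj (e.trans (map_zero ι).symm))
  have hσM : σ M = M := σι m
  set g : K[X] := EuclideanDomain.gcd M Z with hg
  have hgM : g ∣ M := EuclideanDomain.gcd_dvd_left M Z
  have hgZ : g ∣ Z := EuclideanDomain.gcd_dvd_right M Z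
  have hg0 : g ≠ 0 := fun e => hM0 (EuclideanDomain.gcd_eq_zero_iff.mp e).1
  have h2K : IsUnit (2 : K[X]) := by
    have h2K' : (2 : K) ≠ 0 := by
      intro e
      apply h2F
      apply hfinj
      rw [map_ofNat, map_zero, e]
    have : (2 : K[X]) = C (2 : K) := by rw [map_ofNat]
    rw [this]
    exact Polynomial.isUnit_C.mpr (isUnit_iff_ne_zero.mpr h2K')
  have hrK : IsUnit (C r : K[X]) := Polynomial.isUnit_C.mpr (isUnit_iff_ne_zero.mpr hr0)
  have hZcop : IsCoprime Z (σ Z) := by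
    rw [← EuclideanDomain.gcd_isUnit_iff]
    set d : K[X] := EuclideanDomain.gcd Z (σ Z) with hd
    have hd1 : d ∣ Z := EuclideanDomain.gcd_dvd_left _ _
    have hd2 : d ∣ σ Z := EuclideanDomain.gcd_dvd_right _ _
    have hdz : d ∣ ι z := by
      have h3 : d ∣ 2 * ι z := by
        have h4 := dvd_add hd1 hd2
        rwa [hσZ, hZ, show (ι z + C r * ι t) + (ι z - C r * ι t) = 2 * ι z by ring] at h4
      exact (IsUnit.dvd_mul_left h2K).mp h3
    have hdt : d ∣ ι t := by
      have h3 : d ∣ (2 * C r) * ι t := by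
        have h4 := dvd_sub hd1 hd2
        rwa [hσZ, hZ,
          show (ι z + C r * ι t) - (ι z - C r * ι t) = (2 * C r) * ι t by ring] at h4
      exact (IsUnit.dvd_mul_left (h2K.mul hrK)).mp h3
    exact (hzt.map ι).isUnit_of_dvd' hdz hdt
  have hgcop : IsCoprime g (σ g) :=
    (hZcop.of_isCoprime_of_dvd_left hgZ).of_isCoprime_of_dvd_right (_root_.map_dvd σ hgZ)
  have hσgM : σ g ∣ M := by
    have h3 := _root_.map_dvd σ hgM; rwa [hσM] at h3
  have hdvd1 : g * σ g ∣ M := hgcop.mul_dvd hgM hσgM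
  have hdvd2 : M ∣ g * σ g := by
    obtain ⟨m₁, hm₁⟩ := hgM
    obtain ⟨z₁, hz₁⟩ := hgZ
    have hcop1 : IsCoprime m₁ z₁ := by
      rw [← EuclideanDomain.gcd_isUnit_iff]
      have h4 : g * EuclideanDomain.gcd m₁ z₁ ∣ g := by
        have h4' : g * EuclideanDomain.gcd m₁ z₁ ∣ EuclideanDomain.gcd M Z := by
          apply EuclideanDomain.dvd_gcd
          · rw [hm₁]; exact mul_dvd_mul_left g (EuclideanDomain.gcd_dvd_left _ _)
          · rw [hz₁]; exact mul_dvd_mul_left g (EuclideanDomain.gcd_dvd_right _ _)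
        rwa [← hg] at h4'
      have h5 : EuclideanDomain.gcd m₁ z₁ ∣ 1 :=
        (mul_dvd_mul_iff_left hg0).mp (by rw [mul_one]; exact h4)
      exact isUnit_of_dvd_one h5
    have h6 : g * m₁ ∣ g * (z₁ * σ Z) := by
      rw [← hm₁, show g * (z₁ * σ Z) = (g * z₁) * σ Z by ring, ← hz₁]
      exact hMZ
    have h7 : m₁ ∣ z₁ * σ Z := (mul_dvd_mul_iff_left hg0).mp h6
    have h8 : m₁ ∣ σ Z := hcop1.dvd_of_dvd_mul_left h7
    have h9 : m₁ ∣ M := ⟨g, by rw [hm₁]; ring⟩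
    have h10 : σ m₁ ∣ g := by
      rw [hg]
      apply EuclideanDomain.dvd_gcd (c := σ m₁)
      · have h11 := _root_.map_dvd σ h9; rwa [hσM] at h11
      · have h11 := _root_.map_dvd σ h8; rwa [σσ] at h11
    have h11 : m₁ ∣ σ g := by
      have h12 := _root_.map_dvd σ h10; rwa [σσ] at h12
    calc M = g * m₁ := hm₁
    _ ∣ g * σ g := mul_dvd_mul_left g h11
  have hassoc : Associated M (g * σ g) := associated_of_dvd_dvd hdvd2 hdvd1
  obtain ⟨x, y, hxy⟩ := decomp g
  have hgσg : g * σ g = ι (x ^ 2 + C h * y ^ 2) := by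
    rw [hxy, σdecomp, normEq]
  have hxycop : IsCoprime x y := by
    rw [← EuclideanDomain.gcd_isUnit_iff]
    set d : F[X] := EuclideanDomain.gcd x y with hd
    have hdg : ι d ∣ g := by
      rw [hxy]
      exact dvd_add (_root_.map_dvd ι (EuclideanDomain.gcd_dvd_left x y))
        ((_root_.map_dvd ι (EuclideanDomain.gcd_dvd_right x y)).mul_left (C r))
    have hdσg : ι d ∣ σ g := by
      have h3 := _root_.map_dvd σ hdg; rwa [σι] at h3
    have hu : IsUnit (ι d) := hgcop.isUnit_of_dvd' hdg hdσg
    rw [Polynomial.isUnit_iff_degree_eq_zero]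
    have h3 := degree_eq_zero_of_isUnit hu
    rwa [hι, coe_mapRingHom, degree_map_eq_of_injective hfinj] at h3
  have hassoc2 : Associated (ι m) (ι (x ^ 2 + C h * y ^ 2)) := by
    rw [← hgσg]; exact hassoc
  set w : F[X] := x ^ 2 + C h * y ^ 2 with hw
  obtain ⟨u, hu⟩ := hassoc2
  obtain ⟨c, hcu, hc⟩ := Polynomial.isUnit_iff.mp u.isUnit
  have hmw : ι m * C c = ι w := by rw [hc]; exact hu
  have hlc : m.coeff m.natDegree ≠ 0 := mt leadingCoeff_eq_zero.mp hm0
  have hflc : f (m.coeff m.natDegree) ≠ 0 := fun e => hlc (hfinj (by rw [e, map_zero]))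
  have hcoeff : f (m.coeff m.natDegree) * c = f (w.coeff m.natDegree) := by
    have h3 := congrArg (fun q : K[X] => q.coeff m.natDegree) hmw
    simpa [hι, coe_mapRingHom, coeff_mul_C, coeff_map] using h3
  set v : F := w.coeff m.natDegree / m.coeff m.natDegree with hv
  have hcv : c = f v := by
    rw [hv, map_div₀, eq_div_iff hflc]
    linear_combination hcoeff
  have hv0 : v ≠ 0 := by
    intro e
    rw [e, map_zero] at hcv
    exact hcu.ne_zero hcv
  have hfin : m * C v = w := by
    apply ιinj
    rw [map_mul, ← hmw]
    congr 1
    rw [hι, coe_mapRingHom, map_C, hcv]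
  refine ⟨x, y, hxycop, ?_⟩
  have hunit : IsUnit (C v : F[X]) := Polynomial.isUnit_C.mpr (isUnit_iff_ne_zero.mpr hv0)
  exact ⟨hunit.unit, by rw [IsUnit.unit_spec]; exact hfin⟩
end

section
/- Let F be a field of characteristic different from 2 and h ∈ F[X] a polynomial of degree 1. If a polynomial m ∈ F[X] divides z² + h t² for coprime polynomials z, t ∈ F[X], then m is an associate of x² + h y² for some coprime polynomials x, y ∈ F[X]. -/
open Polynomial

section RepAux

variable {F : Type*} [Field F]

/-- In a GCD monoid, if `m ∣ a * b` then `m ∣ gcd m a * gcd m b`. -/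
private lemma dvd_gcd_mul_gcd' {α : Type*} [CommMonoidWithZero α] [GCDMonoid α]
    {m a b : α} (H : m ∣ a * b) : m ∣ gcd m a * gcd m b := by
  have h1 : m ∣ gcd m a * b := dvd_gcd_mul_of_dvd_mul H
  rw [mul_comm] at h1
  have h2 : m ∣ gcd m b * gcd m a := dvd_gcd_mul_of_dvd_mul h1
  rwa [mul_comm] at h2

/-- Every polynomial decomposes into even and odd parts. -/
private lemma exists_even_odd (g : F[X]) :
    ∃ E O : F[X], g = E.comp (X ^ 2) + X * O.comp (X ^ 2) := by
  induction g using Polynomial.induction_on' with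
  | add p q hp hq =>
      obtain ⟨E1, O1, h1⟩ := hp
      obtain ⟨E2, O2, h2⟩ := hq
      refine ⟨E1 + E2, O1 + O2, ?_⟩
      rw [h1, h2, add_comp, add_comp]; ring
  | monomial n c =>
      rcases Nat.even_or_odd n with ⟨k, hk⟩ | ⟨k, hk⟩
      · refine ⟨C c * X ^ k, 0, ?_⟩
        rw [← C_mul_X_pow_eq_monomial]
        simp [mul_comp, pow_comp, ← pow_mul, hk, two_mul]
      · refine ⟨0, C c * X ^ k, ?_⟩
        rw [← C_mul_X_pow_eq_monomial]
        simp only [zero_comp, zero_add, mul_comp, pow_comp, C_comp, X_comp, ← pow_mul]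
        rw [hk]; ring

private lemma comp_injective' {s : F[X]} (hs : s.natDegree ≠ 0) :
    Function.Injective fun p : F[X] => p.comp s := by
  intro p q hpq
  simp only at hpq
  by_contra hne
  have hd : p - q ≠ 0 := sub_ne_zero.mpr hne
  have h0 : (p - q).comp s = 0 := by rw [sub_comp, hpq, sub_self]
  have h1 : (p - q).natDegree * s.natDegree = 0 := by
    rw [← natDegree_comp, h0, natDegree_zero]
  have h2 : (p - q).natDegree = 0 := by
    rcases Nat.mul_eq_zero.mp h1 with h | h
    · exact h
    · exact absurd h hs
  obtain ⟨c, hc⟩ := natDegree_eq_zero.mp h2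
  rw [← hc, C_comp] at h0
  exact hd (by rw [← hc]; exact h0)

private lemma isUnit_of_comp' {s : F[X]} (hs : s.natDegree ≠ 0) {p : F[X]}
    (hu : IsUnit (p.comp s)) : IsUnit p := by
  have h2 : (p.comp s).natDegree = 0 := natDegree_eq_zero_of_isUnit hu
  rw [natDegree_comp] at h2
  have hp0 : p.natDegree = 0 := by
    rcases Nat.mul_eq_zero.mp h2 with h | h
    · exact h
    · exact absurd h hs
  obtain ⟨c, hc⟩ := natDegree_eq_zero.mp hp0
  rw [← hc, C_comp] at hu
  rw [← hc]
  exact hu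

private lemma prime_of_degree_one (h : F[X]) (hh : h.degree = 1) : Prime h := by
  have hdeg1 : h.natDegree = 1 := natDegree_eq_of_degree_eq_some hh
  have ha : h.coeff 1 ≠ 0 := by
    have h0 : h ≠ 0 := fun h0 => by simp [h0] at hh
    have := leadingCoeff_ne_zero.mpr h0
    rwa [leadingCoeff, hdeg1] at this
  have hC : h = C (h.coeff 1) * X + C (h.coeff 0) := eq_X_add_C_of_degree_le_one (by rw [hh])
  have hfac : h = C (h.coeff 1) * (X - C ((h.coeff 1)⁻¹ * (-h.coeff 0))) := by
    rw [mul_sub, ← C_mul]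
    have : h.coeff 1 * ((h.coeff 1)⁻¹ * (-h.coeff 0)) = -h.coeff 0 := by
      rw [← mul_assoc, mul_inv_cancel₀ ha, one_mul]
    rw [this]
    rw [hC]; simp [C_neg]
  rw [hfac]
  exact (associated_unit_mul_right _ _ (isUnit_C.mpr ha.isUnit)).prime
    (prime_X_sub_C _)

/-- The clean case of the main theorem: `h ∤ z`. -/
private lemma clean_case (hchar : ringChar F ≠ 2) (h : F[X]) (hh : h.degree = 1)
    (m z t : F[X]) (hzt : IsCoprime z t) (hz : ¬ h ∣ z) (hdvd : m ∣ z ^ 2 + h * t ^ 2) :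
    ∃ x y : F[X], IsCoprime x y ∧ Associated m (x ^ 2 + h * y ^ 2) := by
  classical
  have htwo : (2 : F) ≠ 0 := Ring.two_ne_zero hchar
  set a := h.coeff 1 with hadef
  set b := h.coeff 0 with hbdef
  have hdeg1 : h.natDegree = 1 := natDegree_eq_of_degree_eq_some hh
  have ha : a ≠ 0 := by
    have h0 : h ≠ 0 := fun h0 => by simp [h0] at hh
    have := leadingCoeff_ne_zero.mpr h0
    rwa [leadingCoeff, hdeg1] at this
  have hC : h = C a * X + C b := eq_X_add_C_of_degree_le_one (by rw [hh])
  set s : F[X] := C a⁻¹ * (-X ^ 2 - C b) with hsdef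
  have hsdeg : s.natDegree = 2 := by
    rw [hsdef, natDegree_C_mul (inv_ne_zero ha)]
    compute_degree!
  have hsne : s.natDegree ≠ 0 := by rw [hsdeg]; norm_num
  have hinj : Function.Injective fun p : F[X] => p.comp s := comp_injective' hsne
  -- the substitution homomorphisms
  set φ : F[X] →+* F[X] := eval₂RingHom C s with hφdef
  have hφ : ∀ p : F[X], φ p = p.comp s := fun p => rfl
  set τ : F[X] →+* F[X] := eval₂RingHom C (-X) with hτdef
  have hτ : ∀ p : F[X], τ p = p.comp (-X) := fun p => rfl
  have hττ : ∀ p : F[X], τ (τ p) = p := by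
    intro p
    rw [hτ, hτ, comp_assoc]
    simp
  have hτX : τ X = -X := by rw [hτ, X_comp]
  have hτφ : ∀ p : F[X], τ (φ p) = φ p := by
    intro p
    rw [hφ, hτ, comp_assoc]
    congr 1
    rw [hsdef]
    simp [mul_comp, sub_comp, neg_comp, pow_comp, C_comp, X_comp, neg_pow]
  have hhs : φ h = -X ^ 2 := by
    rw [hφ, hC]
    rw [add_comp, mul_comp, C_comp, C_comp, X_comp, hsdef, ← mul_assoc, ← C_mul,
      mul_inv_cancel₀ ha, C_1, one_mul]
    ring
  -- w and its conjugate
  set w : F[X] := φ z + X * φ t with hwdef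
  have hτw : τ w = φ z - X * φ t := by
    rw [hwdef, map_add, map_mul, hτφ, hτφ, hτX]
    ring
  have hNf : w * τ w = φ (z ^ 2 + h * t ^ 2) := by
    rw [hτw, map_add, map_pow, map_mul, map_pow, hhs, hwdef]
    ring
  have hMdvd : φ m ∣ w * τ w := by
    rw [hNf]
    exact _root_.map_dvd φ hdvd
  -- coprimality of w and τ w
  have hct : IsCoprime (φ z) (φ t) := hzt.map φ
  have hXz : ¬ (X : F[X]) ∣ φ z := by
    rw [X_dvd_iff, hφ, coeff_zero_eq_eval_zero, eval_comp]
    intro h0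
    apply hz
    have hroot : (X - C (s.eval 0)) ∣ z := dvd_iff_isRoot.mpr h0
    have hs0 : s.eval 0 = a⁻¹ * (-b) := by
      rw [hsdef]; simp
    have hfac : h = C a * (X - C (s.eval 0)) := by
      rw [hs0, mul_sub, ← C_mul]
      have : a * (a⁻¹ * (-b)) = -b := by
        rw [← mul_assoc, mul_inv_cancel₀ ha, one_mul]
      rw [this, hC]
      simp [C_neg]
    have hCa : (C a : F[X]) * C a⁻¹ = 1 := by
      rw [← C_mul, mul_inv_cancel₀ ha, C_1]
    rw [hfac]
    obtain ⟨k, hk⟩ := hroot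
    refine ⟨C a⁻¹ * k, ?_⟩
    rw [hk]
    linear_combination (-(X - C (s.eval 0)) * k) * hCa
  have hXφz : IsCoprime (φ z) X :=
    ((Polynomial.prime_X.coprime_iff_not_dvd).mpr hXz).symm
  have h1 : IsCoprime (φ z) (X * φ t) := hXφz.mul_right hct
  obtain ⟨u, v, huv⟩ := h1
  have hC2 : (C ((2:F)⁻¹) : F[X]) * 2 = 1 := by
    have h2C : ((2:F[X])) = C (2:F) := (map_ofNat C 2).symm
    rw [h2C, ← C_mul, inv_mul_cancel₀ htwo, C_1]
  have hcop_wτ : IsCoprime w (τ w) := by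
    refine ⟨C ((2:F)⁻¹) * (u + v), C ((2:F)⁻¹) * (u - v), ?_⟩
    rw [hτw, hwdef]
    linear_combination 2 * C ((2:F)⁻¹) * huv + hC2
  -- gcd descent
  set g := gcd (φ m) w with hgdef
  have hgM : g ∣ φ m := gcd_dvd_left _ _
  have hgw : g ∣ w := gcd_dvd_right _ _
  have hτM : τ (φ m) = φ m := hτφ m
  have hτgM : τ g ∣ φ m := by
    have := _root_.map_dvd τ hgM
    rwa [hτM] at this
  have hτgτw : τ g ∣ τ w := _root_.map_dvd τ hgw
  have hM1 : φ m ∣ g * gcd (φ m) (τ w) := dvd_gcd_mul_gcd' hMdvd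
  have ha1 : gcd (φ m) (τ w) ∣ τ g := by
    have h1 : τ (gcd (φ m) (τ w)) ∣ φ m := by
      have := _root_.map_dvd τ (gcd_dvd_left (φ m) (τ w))
      rwa [hτM] at this
    have h2 : τ (gcd (φ m) (τ w)) ∣ w := by
      have := _root_.map_dvd τ (gcd_dvd_right (φ m) (τ w))
      rwa [hττ] at this
    have h3 : τ (gcd (φ m) (τ w)) ∣ g := dvd_gcd h1 h2
    have := _root_.map_dvd τ h3
    rwa [hττ] at this
  have hMgg : φ m ∣ g * τ g := hM1.trans (mul_dvd_mul_left g ha1)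
  have hcop_g : IsCoprime g (τ g) :=
    (hcop_wτ.of_isCoprime_of_dvd_left hgw).of_isCoprime_of_dvd_right hτgτw
  have hggM : g * τ g ∣ φ m := hcop_g.mul_dvd hgM hτgM
  have hassocM : Associated (φ m) (g * τ g) := associated_of_dvd_dvd hMgg hggM
  -- decompose g into even and odd parts
  obtain ⟨E, O, hEO⟩ := exists_even_odd g
  have hψ : ∀ p : F[X], φ (p.comp (C (-a) * X + C (-b))) = p.comp (X ^ 2) := by
    intro p
    rw [hφ, comp_assoc]
    congr 1
    rw [add_comp, mul_comp, C_comp, C_comp, X_comp, hsdef, ← mul_assoc, ← C_mul]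
    have : (-a) * a⁻¹ = -1 := by
      rw [neg_mul, mul_inv_cancel₀ ha]
    rw [this]
    simp [C_neg]
  set x := E.comp (C (-a) * X + C (-b)) with hxdef
  set y := O.comp (C (-a) * X + C (-b)) with hydef
  have hgxy : g = φ x + X * φ y := by
    rw [hEO, hxdef, hydef, hψ E, hψ O]
  have hτg_eq : τ g = φ x - X * φ y := by
    rw [hgxy, map_add, map_mul, hτφ, hτφ, hτX]
    ring
  have hprod : g * τ g = φ (x ^ 2 + h * y ^ 2) := by
    rw [hτg_eq, hgxy, map_add, map_pow, map_mul, map_pow, hhs]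
    ring
  -- coprimality of x and y
  have hxy_cop : IsCoprime x y := by
    rw [← gcd_isUnit_iff]
    have hdx : gcd x y ∣ x := gcd_dvd_left _ _
    have hdy : gcd x y ∣ y := gcd_dvd_right _ _
    have h1 : φ (gcd x y) ∣ g := by
      rw [hgxy]
      exact dvd_add (_root_.map_dvd φ hdx) ((_root_.map_dvd φ hdy).mul_left X)
    have h2 : φ (gcd x y) ∣ τ g := by
      rw [hτg_eq]
      exact dvd_sub (_root_.map_dvd φ hdx) ((_root_.map_dvd φ hdy).mul_left X)
    have h3 : IsUnit (φ (gcd x y)) := hcop_g.isUnit_of_dvd' h1 h2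
    rw [hφ] at h3
    exact isUnit_of_comp' hsne h3
  -- pull the association back along φ
  have hassoc2 : Associated (φ m) (φ (x ^ 2 + h * y ^ 2)) := by
    rw [← hprod]; exact hassocM
  obtain ⟨uu, huu⟩ := hassoc2
  obtain ⟨c, hcunit, hcC⟩ := Polynomial.isUnit_iff.mp uu.isUnit
  have heq : φ (m * C c) = φ (x ^ 2 + h * y ^ 2) := by
    rw [map_mul]
    have : φ (C c) = C c := by rw [hφ, C_comp]
    rw [this, hcC, huu]
  have hmc : m * C c = x ^ 2 + h * y ^ 2 := by
    apply hinj
    exact heq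
  exact ⟨x, y, hxy_cop, ⟨(isUnit_C.mpr hcunit).unit, by rw [IsUnit.unit_spec]; exact hmc⟩⟩

end RepAux

/-- Over a field `F` of characteristic ≠ 2, if `h ∈ F[X]` has degree 1
and `m ∈ F[X]` divides `z² + h t²` with `z, t` coprime, then `m` is an associate of
`x² + h y²` for some coprime `x, y ∈ F[X]`. -/
theorem rep_of_dvd_degree_one {F : Type*} [Field F] (hchar : ringChar F ≠ 2)
    (h : F[X]) (hh : h.degree = 1)
    (m z t : F[X]) (hzt : IsCoprime z t) (hdvd : m ∣ z ^ 2 + h * t ^ 2) :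
    ∃ x y : F[X], IsCoprime x y ∧ Associated m (x ^ 2 + h * y ^ 2) := by
  classical
  have hprime : Prime h := prime_of_degree_one h hh
  by_cases hzc : h ∣ z
  · obtain ⟨z₁, hz₁⟩ := hzc
    have hht : ¬ h ∣ t := fun hd =>
      hprime.not_unit (hzt.isUnit_of_dvd' ⟨z₁, hz₁⟩ hd)
    have hN : z ^ 2 + h * t ^ 2 = h * (t ^ 2 + h * z₁ ^ 2) := by rw [hz₁]; ring
    have hcop1 : IsCoprime t z₁ := by
      have h2 := hzt.symm
      rw [hz₁] at h2
      exact h2.of_mul_right_right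
    rw [hN] at hdvd
    by_cases hhm : h ∣ m
    · obtain ⟨m', hm'⟩ := hhm
      have hm'dvd : m' ∣ t ^ 2 + h * z₁ ^ 2 := by
        rw [hm'] at hdvd
        exact (mul_dvd_mul_iff_left hprime.ne_zero).mp hdvd
      obtain ⟨x, y, hxy, hassoc⟩ := clean_case hchar h hh m' t z₁ hcop1 hht hm'dvd
      have hhx : ¬ h ∣ x := by
        intro hdx
        have h1 : h ∣ x ^ 2 + h * y ^ 2 :=
          dvd_add (dvd_pow hdx two_ne_zero) (dvd_mul_right h (y ^ 2))
        have h2 : h ∣ m' := (hassoc.dvd_iff_dvd_right).mpr h1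
        have h3 : h ∣ t ^ 2 + h * z₁ ^ 2 := h2.trans hm'dvd
        have h4 : h ∣ t ^ 2 := by
          have := dvd_sub h3 (dvd_mul_right h (z₁ ^ 2))
          simpa using this
        exact hht (hprime.dvd_of_dvd_pow h4)
      refine ⟨h * y, x, ?_, ?_⟩
      · exact (hprime.coprime_iff_not_dvd.mpr hhx).mul_left hxy.symm
      · rw [hm']
        have h4 : (h * y) ^ 2 + h * x ^ 2 = h * (x ^ 2 + h * y ^ 2) := by ring
        rw [h4]
        exact Associated.mul_left h hassoc
    · have hcophm : IsCoprime m h := (hprime.coprime_iff_not_dvd.mpr hhm).symm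
      have hmd : m ∣ t ^ 2 + h * z₁ ^ 2 := hcophm.dvd_of_dvd_mul_left hdvd
      exact clean_case hchar h hh m t z₁ hcop1 hht hmd
  · exact clean_case hchar h hh m z t hzt hzc hdvd
end

section
/- In Q[X], there exist no polynomials x, y ∈ Q[X] and nonzero rational u such that X − 1 = u·(x² + y²·(X² − 2)), even though X − 1 divides (X²)² + 1²·(X² − 2) = X⁴ + X² − 2. -/
open Polynomial

/-- In `ℚ[X]`, `X - 1` divides `X⁴ + X² - 2 = (X²)² + 1²·(X² - 2)`, yet `X - 1`
cannot be written as `u (x² + y² (X² - 2))` for polynomials `x, y` and a nonzero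
rational `u`. -/
theorem no_rep_X_sub_one :
    ((X - 1 : ℚ[X]) ∣ (X ^ 2) ^ 2 + 1 ^ 2 * (X ^ 2 - 2)) ∧
      ¬∃ (x y : ℚ[X]) (u : ℚ), u ≠ 0 ∧
        (X - 1 : ℚ[X]) = C u * (x ^ 2 + y ^ 2 * (X ^ 2 - 2)) := by
  constructor
  · exact ⟨X ^ 3 + X ^ 2 + 2 * X + 2, by ring⟩
  · rintro ⟨x, y, u, hu, h⟩
    have hs : (Real.sqrt 2) ^ 2 = 2 := Real.sq_sqrt (by norm_num)
    have h1 := congrArg (aeval (Real.sqrt 2) : ℚ[X] →ₐ[ℚ] ℝ) h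
    have h2 := congrArg (aeval (-Real.sqrt 2) : ℚ[X] →ₐ[ℚ] ℝ) h
    simp only [map_sub, map_add, map_mul, map_pow, map_one, aeval_X, aeval_C,
      map_ofNat] at h1 h2
    rw [hs] at h1
    rw [show (-Real.sqrt 2) ^ 2 = 2 by rw [neg_pow]; simp [hs]] at h2
    simp only [sub_self, mul_zero, add_zero] at h1 h2
    have key : (Real.sqrt 2 - 1) * (-Real.sqrt 2 - 1) = -1 := by nlinarith [hs]
    rw [h1, h2] at key
    nlinarith [sq_nonneg (algebraMap ℚ ℝ u * (aeval (Real.sqrt 2) x * aeval (-Real.sqrt 2) x)), key]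
end

section
/- Let F be a field of characteristic different from 2 and 3, and set h = X³ + X² + X ∈ F[X]. Then X² + X + 1 divides 0² + 1²·h, but X² + X + 1 cannot be written as x² + y²·h for any x, y ∈ F[X]. -/
open Polynomial

/-- Over a field `F` with characteristic different from 2 and 3, the polynomial
`X² + X + 1` divides `0² + 1²·(X³ + X² + X)` but is not of the form
`x² + y²·(X³ + X² + X)`. -/
theorem no_rep_cubic_h {F : Type*} [Field F]
    (hchar2 : ringChar F ≠ 2) (hchar3 : ringChar F ≠ 3) :
    ((X ^ 2 + X + 1 : F[X]) ∣ 0 ^ 2 + 1 ^ 2 * (X ^ 3 + X ^ 2 + X)) ∧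
      ¬∃ x y : F[X], (X ^ 2 + X + 1 : F[X]) = x ^ 2 + y ^ 2 * (X ^ 3 + X ^ 2 + X) := by
  have h3 : (3 : F) ≠ 0 := fun h =>
    hchar3 (CharP.ringChar_of_prime_eq_zero Nat.prime_three (by exact_mod_cast h))
  constructor
  · exact ⟨X, by ring⟩
  · rintro ⟨x, y, hxy⟩
    set p : F[X] := X ^ 2 + X + 1 with hp
    have hpdeg : p.natDegree = 2 := by
      rw [hp]; compute_degree!
    have hpne : p ≠ 0 := fun h => by simp [h] at hpdeg
    -- rewrite the equation
    have key : x ^ 2 = p * (1 - X * y ^ 2) := by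
      rw [hp]; linear_combination -hxy
    by_cases hy : y = 0
    · -- then p = x ^ 2, contradicting squarefreeness of p
      subst hy
      have hpx : p = x ^ 2 := by linear_combination -key
      have hsep : p.Separable := by
        have hd : derivative p = 2 * X + 1 := by
          rw [hp]; simp [map_ofNat, one_add_one_eq_two]
        have h31 : (C (3:F)⁻¹) * 3 = 1 := by
          have h3c : (3 : F[X]) = C 3 := (map_ofNat C 3).symm
          rw [h3c, ← C_mul, inv_mul_cancel₀ h3, C_1]
        refine ⟨C (3:F)⁻¹ * 4, -(C (3:F)⁻¹) * (2 * X + 1), ?_⟩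
        rw [hd, hp]
        linear_combination h31
      have hsq : Squarefree p := hsep.squarefree
      have hxne : x ≠ 0 := fun h => by simp [h] at hpx; exact hpne hpx
      have : IsUnit x := hsq x ⟨1, by rw [hpx]; ring⟩
      have hxdeg : x.natDegree = 0 := natDegree_eq_zero_of_isUnit this
      have : p.natDegree = 0 := by rw [hpx, natDegree_pow, hxdeg]
      omega
    · -- degree contradiction: even = odd
      have hq : (1 - X * y ^ 2 : F[X]).natDegree = 1 + 2 * y.natDegree := by
        rw [natDegree_sub_eq_right_of_natDegree_lt]
        · rw [natDegree_mul X_ne_zero (pow_ne_zero 2 hy), natDegree_X, natDegree_pow]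
        · rw [natDegree_mul X_ne_zero (pow_ne_zero 2 hy), natDegree_X, natDegree_pow]
          simp
      have hqne : (1 - X * y ^ 2 : F[X]) ≠ 0 := fun h => by
        rw [h] at hq; simp at hq; omega
      have hxne : x ≠ 0 := fun h => by
        rw [h] at key
        exact (mul_ne_zero hpne hqne) (by simpa using key.symm)
      have := congrArg natDegree key
      rw [natDegree_pow, natDegree_mul hpne hqne, hpdeg, hq] at this
      omega
end

section
/- Every polynomial m ∈ R[X] with real coefficients that takes only positive values on all of R can be written as x² + (X² + 1)·y² for some x, y ∈ R[X]. -/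
open Polynomial

/-- Multiplicativity of the quadratic form `x² + (X²+1) y²` (norm form). -/
lemma rep_mul {p q : ℝ[X]} (hp : ∃ x y : ℝ[X], p = x ^ 2 + (X ^ 2 + 1) * y ^ 2)
    (hq : ∃ x y : ℝ[X], q = x ^ 2 + (X ^ 2 + 1) * y ^ 2) :
    ∃ x y : ℝ[X], p * q = x ^ 2 + (X ^ 2 + 1) * y ^ 2 := by
  obtain ⟨a, b, rfl⟩ := hp
  obtain ⟨c, d, rfl⟩ := hq
  exact ⟨a * c - (X ^ 2 + 1) * b * d, a * d + b * c, by ring⟩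

/-- Any monic real quadratic without real roots is representable. -/
lemma rep_quad (a b : ℝ) (hb : b ≠ 0) :
    ∃ x y : ℝ[X], X ^ 2 - C (2 * a) * X + C (a ^ 2 + b ^ 2)
      = x ^ 2 + (X ^ 2 + 1) * y ^ 2 := by
  have hb2 : 0 < b ^ 2 := by positivity
  rcases eq_or_ne a 0 with rfl | ha
  · rcases le_or_gt (b ^ 2) 1 with h1 | h1
    · refine ⟨C (Real.sqrt (1 - b ^ 2)) * X, C b, Polynomial.funext fun t => ?_⟩
      have h2 : Real.sqrt (1 - b ^ 2) ^ 2 = 1 - b ^ 2 := Real.sq_sqrt (by linarith)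
      simp only [eval_add, eval_mul, eval_pow, eval_sub, eval_C, eval_X, eval_one]
      nlinarith [sq_nonneg t]
    · refine ⟨C (Real.sqrt (b ^ 2 - 1)), 1, Polynomial.funext fun t => ?_⟩
      have h2 : Real.sqrt (b ^ 2 - 1) ^ 2 = b ^ 2 - 1 := Real.sq_sqrt (by linarith)
      simp only [eval_add, eval_mul, eval_pow, eval_sub, eval_C, eval_X, eval_one]
      nlinarith
  · have ha2 : 0 < a ^ 2 := by positivity
    set D : ℝ := (a ^ 2 + b ^ 2 - 1) ^ 2 + 4 * a ^ 2 with hD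
    have hD0 : 0 ≤ D := by positivity
    have hsqD : Real.sqrt D ^ 2 = D := Real.sq_sqrt hD0
    have hsqDnn : 0 ≤ Real.sqrt D := Real.sqrt_nonneg D
    set s : ℝ := (-(a ^ 2 + b ^ 2 - 1) + Real.sqrt D) / 2 with hs
    have hsq : s ^ 2 + (a ^ 2 + b ^ 2 - 1) * s - a ^ 2 = 0 := by
      rw [hs]; field_simp; nlinarith [hsqD]
    have hs0 : 0 < s := by
      by_contra h
      push_neg at h
      have hc : Real.sqrt D ≤ a ^ 2 + b ^ 2 - 1 := by
        rw [hs] at h; linarith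
      nlinarith [hsqD, hsqDnn, mul_le_mul_of_nonneg_left hc hsqDnn]
    have hs1 : s < 1 := by nlinarith [sq_nonneg b]
    set α : ℝ := Real.sqrt s with hα
    have hα2 : α ^ 2 = s := Real.sq_sqrt hs0.le
    have hα0 : α ≠ 0 := (Real.sqrt_pos.mpr hs0).ne'
    set β : ℝ := -a / α with hβ
    have hαβ : α * β = -a := by rw [hβ]; field_simp
    have hβ2 : β ^ 2 * s = a ^ 2 := by
      rw [hβ, ← hα2]; field_simp
    set γ : ℝ := Real.sqrt (1 - s) with hγ
    have hγ2 : γ ^ 2 = 1 - s := Real.sq_sqrt (by linarith)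
    refine ⟨C α * X + C β, C γ, Polynomial.funext fun t => ?_⟩
    simp only [eval_add, eval_mul, eval_pow, eval_sub, eval_C, eval_X, eval_one]
    have key' : s * (β ^ 2 + (1 - s)) = s * (a ^ 2 + b ^ 2) := by
      linear_combination hβ2 - hsq
    have key : β ^ 2 + (1 - s) = a ^ 2 + b ^ 2 := mul_left_cancel₀ hs0.ne' key'
    linear_combination (-(t ^ 2)) * hα2 + (-2 * t) * hαβ + (-(t ^ 2 + 1)) * hγ2 - key

/-- Every real polynomial taking only positive values on `ℝ` can be written as
`x² + (X² + 1) y²` with `x, y ∈ ℝ[X]`. -/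
theorem positive_poly_rep (m : ℝ[X]) (hm : ∀ t : ℝ, 0 < m.eval t) :
    ∃ x y : ℝ[X], m = x ^ 2 + (X ^ 2 + 1) * y ^ 2 := by
  have key : ∀ n : ℕ, ∀ m : ℝ[X], m.natDegree = n → (∀ t : ℝ, 0 < m.eval t) →
      ∃ x y : ℝ[X], m = x ^ 2 + (X ^ 2 + 1) * y ^ 2 := by
    intro n
    induction n using Nat.strong_induction_on with
    | _ n ih =>
      intro m hdeg hm
      rcases Nat.eq_zero_or_pos n with hn0 | hn1
      · -- constant case
        subst hn0
        have hC := Polynomial.eq_C_of_natDegree_eq_zero hdeg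
        have hc : 0 < m.coeff 0 := by
          have := hm 0
          rw [hC] at this; simpa using this
        refine ⟨C (Real.sqrt (m.coeff 0)), 0, ?_⟩
        conv_lhs => rw [hC]
        rw [← C_pow, Real.sq_sqrt hc.le]
        ring
      · -- there is a complex root
        have hm0 : m ≠ 0 := fun h => by simpa [h] using hm 0
        have hdeg' : 0 < (m.map (algebraMap ℝ ℂ)).degree := by
          rw [Polynomial.degree_map_eq_of_injective (algebraMap ℝ ℂ).injective]
          exact Polynomial.natDegree_pos_iff_degree_pos.mp (by omega)
        obtain ⟨z, hz⟩ := Complex.exists_root hdeg'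
        have hz' : Polynomial.aeval z m = 0 := by
          rwa [Polynomial.aeval_def, ← Polynomial.eval_map]
        have him : z.im ≠ 0 := by
          intro h0
          have hzre : z = (z.re : ℂ) := Complex.ext rfl (by simp [h0])
          rw [hzre] at hz'
          erw [Polynomial.aeval_ofReal, RCLike.ofReal_eq_zero] at hz'
          exact (hm z.re).ne' hz'
        obtain ⟨m', hdvd⟩ := m.quadratic_dvd_of_aeval_eq_zero_im_ne_zero hz' him
        set q : ℝ[X] := X ^ 2 - C (2 * z.re) * X + C (‖z‖ ^ 2) with hq
        have hnorm : ‖z‖ ^ 2 = z.re ^ 2 + z.im ^ 2 := by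
          rw [Complex.sq_norm, Complex.normSq_apply]; ring
        have hqeval : ∀ t : ℝ, q.eval t = (t - z.re) ^ 2 + z.im ^ 2 := by
          intro t
          simp only [hq, eval_add, eval_sub, eval_pow, eval_mul, eval_C, eval_X, hnorm]
          ring
        have hqpos : ∀ t : ℝ, 0 < q.eval t := by
          intro t
          rw [hqeval t]
          have : (0:ℝ) < z.im ^ 2 := by positivity
          nlinarith [sq_nonneg (t - z.re)]
        have hq0 : q ≠ 0 := fun h => by simpa [h] using hqpos 0
        have hm'pos : ∀ t : ℝ, 0 < m'.eval t := by
          intro t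
          have h1 : 0 < q.eval t * m'.eval t := by
            rw [← Polynomial.eval_mul, ← hdvd]; exact hm t
          by_contra hc
          push_neg at hc
          nlinarith [hqpos t]
        have hm'0 : m' ≠ 0 := fun h => by simpa [h] using hm'pos 0
        have hqdeg : q.natDegree = 2 := by
          rw [hq]; compute_degree!
        have hdeglt : m'.natDegree < n := by
          have := Polynomial.natDegree_mul hq0 hm'0
          rw [← hdvd, hdeg, hqdeg] at this
          omega
        have hrep' := ih m'.natDegree hdeglt m' rfl hm'pos
        have hrepq : ∃ x y : ℝ[X], q = x ^ 2 + (X ^ 2 + 1) * y ^ 2 := by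
          rw [hq, hnorm]
          exact rep_quad z.re z.im him
        rw [hdvd]
        exact rep_mul hrepq hrep'
  exact key m.natDegree m rfl hm
end

section
/- Let a, c > 0 and b be real numbers with b² − ac < 0 and b ≠ 0, and set d = sqrt((a + c − sqrt((a−c)² + 4b²))/2) and e = sign(b). Then aX² + 2bX + c = (sqrt(a − d²)·X + e·sqrt(c − d²))² + d²·(X² + 1) in R[X]. -/
open Polynomial

/-- For a positive-definite real quadratic `aX² + 2bX + c` (with `a, c > 0`,
`b² - ac < 0`, `b ≠ 0`), setting `d = √((a + c - √((a-c)² + 4b²))/2)` and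
`e = sign(b)`, we have `aX² + 2bX + c = (√(a - d²) X + e √(c - d²))² + d² (X² + 1)`. -/
theorem quadratic_rep (a b c : ℝ) (ha : 0 < a) (hc : 0 < c)
    (hpd : b ^ 2 - a * c < 0) (hb : b ≠ 0) :
    (C a) * X ^ 2 + C (2 * b) * X + C c =
      (C (Real.sqrt (a - (Real.sqrt ((a + c - Real.sqrt ((a - c) ^ 2 + 4 * b ^ 2)) / 2)) ^ 2)) * X +
        C (Real.sign b *
          Real.sqrt (c - (Real.sqrt ((a + c - Real.sqrt ((a - c) ^ 2 + 4 * b ^ 2)) / 2)) ^ 2))) ^ 2 +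
      C ((Real.sqrt ((a + c - Real.sqrt ((a - c) ^ 2 + 4 * b ^ 2)) / 2)) ^ 2) * (X ^ 2 + 1) := by
  set s := Real.sqrt ((a - c) ^ 2 + 4 * b ^ 2) with hs_def
  have hsnn : (0:ℝ) ≤ (a - c) ^ 2 + 4 * b ^ 2 := by positivity
  have hs2 : s ^ 2 = (a - c) ^ 2 + 4 * b ^ 2 := Real.sq_sqrt hsnn
  have hs0 : 0 ≤ s := Real.sqrt_nonneg _
  have hs_le : s ≤ a + c := by
    rw [hs_def]
    have : (a - c) ^ 2 + 4 * b ^ 2 ≤ (a + c) ^ 2 := by nlinarith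
    calc Real.sqrt ((a - c) ^ 2 + 4 * b ^ 2) ≤ Real.sqrt ((a + c) ^ 2) :=
          Real.sqrt_le_sqrt this
      _ = a + c := by rw [Real.sqrt_sq (by linarith)]
  have hs_ge1 : c - a ≤ s := by
    rw [hs_def]
    calc c - a ≤ |a - c| := by rw [abs_sub_comm]; exact le_abs_self _
      _ = Real.sqrt ((a - c) ^ 2) := (Real.sqrt_sq_eq_abs _).symm
      _ ≤ _ := Real.sqrt_le_sqrt (by nlinarith)
  have hs_ge2 : a - c ≤ s := by
    rw [hs_def]
    calc a - c ≤ |a - c| := le_abs_self _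
      _ = Real.sqrt ((a - c) ^ 2) := (Real.sqrt_sq_eq_abs _).symm
      _ ≤ _ := Real.sqrt_le_sqrt (by nlinarith)
  have hdnn : (0:ℝ) ≤ (a + c - s) / 2 := by linarith
  have hd2 : (Real.sqrt ((a + c - s) / 2)) ^ 2 = (a + c - s) / 2 := Real.sq_sqrt hdnn
  set d2 := (Real.sqrt ((a + c - s) / 2)) ^ 2 with hd2_def
  have hA : a - d2 = (a - c + s) / 2 := by rw [hd2]; ring
  have hC : c - d2 = (c - a + s) / 2 := by rw [hd2]; ring
  have hAnn : 0 ≤ a - d2 := by rw [hA]; linarith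
  have hCnn : 0 ≤ c - d2 := by rw [hC]; linarith
  have hA2 : (Real.sqrt (a - d2)) ^ 2 = a - d2 := Real.sq_sqrt hAnn
  have hC2 : (Real.sqrt (c - d2)) ^ 2 = c - d2 := Real.sq_sqrt hCnn
  have hprod : Real.sqrt (a - d2) * Real.sqrt (c - d2) = |b| := by
    rw [← Real.sqrt_mul hAnn]
    have : (a - d2) * (c - d2) = b ^ 2 := by
      rw [hA, hC]; nlinarith [hs2]
    rw [this, Real.sqrt_sq_eq_abs]
  have hsign : Real.sign b * |b| = b := by
    rcases lt_or_gt_of_ne hb with h | h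
    · rw [Real.sign_of_neg h, abs_of_neg h]; ring
    · rw [Real.sign_of_pos h, abs_of_pos h]; ring
  have hsignsq : Real.sign b ^ 2 = 1 := by
    rcases lt_or_gt_of_ne hb with h | h
    · rw [Real.sign_of_neg h]; ring
    · rw [Real.sign_of_pos h]; ring
  have h1 : a = (Real.sqrt (a - d2)) ^ 2 + d2 := by rw [hA2]; ring
  have h3 : c = (Real.sign b * Real.sqrt (c - d2)) ^ 2 + d2 := by
    rw [mul_pow, hsignsq, hC2]; ring
  have h2 : 2 * b = 2 * (Real.sqrt (a - d2) * (Real.sign b * Real.sqrt (c - d2))) := by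
    rw [show Real.sqrt (a - d2) * (Real.sign b * Real.sqrt (c - d2)) =
        Real.sign b * (Real.sqrt (a - d2) * Real.sqrt (c - d2)) by ring, hprod, hsign]
  calc (C a) * X ^ 2 + C (2 * b) * X + C c
      = C ((Real.sqrt (a - d2)) ^ 2 + d2) * X ^ 2 +
        C (2 * (Real.sqrt (a - d2) * (Real.sign b * Real.sqrt (c - d2)))) * X +
        C ((Real.sign b * Real.sqrt (c - d2)) ^ 2 + d2) := by
          rw [← h1, ← h2, ← h3]
    _ = _ := by simp only [map_add, map_mul, map_pow, map_ofNat]; ring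
end

section
/- Every real polynomial m ∈ R[X] is an associate (up to multiplication by a nonzero real constant) of a polynomial of the form x² + 2Xxy − y² = (x + Xy)² + (−1 − X²)y² for some x, y ∈ R[X]. -/
open Polynomial

private def RepQ (m : ℝ[X]) : Prop :=
  ∃ (x y : ℝ[X]) (u : ℝ), u ≠ 0 ∧ m = C u * (x ^ 2 + 2 * X * x * y - y ^ 2)

private lemma repq_mul {m n : ℝ[X]} (hm : RepQ m) (hn : RepQ n) : RepQ (m * n) := by
  obtain ⟨x1, y1, u1, hu1, rfl⟩ := hm
  obtain ⟨x2, y2, u2, hu2, rfl⟩ := hn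
  refine ⟨x1*x2 + y1*y2, x1*y2 + x2*y1 + 2*X*y1*y2, u1*u2, mul_ne_zero hu1 hu2, ?_⟩
  simp only [map_mul]
  ring

private lemma repq_C (a : ℝ) : RepQ (C a) := by
  rcases eq_or_ne a 0 with rfl | h
  · exact ⟨0, 0, 1, one_ne_zero, by simp⟩
  · exact ⟨1, 0, a, h, by ring⟩

private lemma repq_linear (a : ℝ) : RepQ (X - C a) := by
  set e := Real.sqrt (a^2+1) - a with he
  have hs : Real.sqrt (a^2+1) ^ 2 = a^2+1 := Real.sq_sqrt (by positivity)
  have hsn : 0 ≤ Real.sqrt (a^2+1) := Real.sqrt_nonneg _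
  have he0 : 0 < e := by nlinarith
  have key : e^2 + 2*(a*e) = 1 := by rw [he]; nlinarith
  refine ⟨C e, 1, (2*e)⁻¹, by positivity, ?_⟩
  have h2e : (2*e) ≠ 0 := by positivity
  apply mul_left_cancel₀ (show (C (2*e) : ℝ[X]) ≠ 0 by simpa using h2e)
  rw [← mul_assoc, ← C_mul, mul_inv_cancel₀ h2e, map_one, one_mul]
  have hC : (C (e^2 + 2*(a*e)) : ℝ[X]) = C 1 := by rw [key]
  simp only [map_add, map_mul, map_pow, map_one, map_ofNat] at hC
  rw [map_mul, map_ofNat]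
  linear_combination -hC

private lemma exists_rs (b c : ℝ) (h : b^2 < 4*c) :
    ∃ r s : ℝ, 0 < s ∧ r*(1-s) = s*b ∧ (1+s)^2 - 4*r^2 = 4*s*c := by
  rcases eq_or_ne b 0 with rfl | hb
  · rcases le_or_gt c 1 with hc | hc
    · refine ⟨Real.sqrt (1-c), 1, one_pos, by ring, ?_⟩
      have := Real.sq_sqrt (show (0:ℝ) ≤ 1-c by linarith)
      nlinarith
    · set w := Real.sqrt (c^2-c) with hw
      have hw2 : w^2 = c^2-c := Real.sq_sqrt (by nlinarith)
      have hwn : 0 ≤ w := Real.sqrt_nonneg _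
      refine ⟨0, 2*c-1+2*w, by nlinarith, by ring, by nlinarith⟩
  · set F : ℝ → ℝ := fun s => (1-s^2)^2 - 4*b^2*s^2 - 4*c*s*(1-s)^2 with hF
    have hb2 : 0 < b^2 := by positivity
    have hcont : ContinuousOn F (Set.Icc 0 1) := by fun_prop
    have h0 : F 0 = 1 := by simp [hF]
    have h1 : F 1 = -(4*b^2) := by simp [hF]
    have hmem : (0:ℝ) ∈ Set.Icc (F 1) (F 0) :=
      ⟨by rw [h1]; linarith, by rw [h0]; norm_num⟩
    obtain ⟨s, hs, hFs⟩ := intermediate_value_Icc' (by norm_num) hcont hmem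
    have hs0 : s ≠ 0 := by rintro rfl; rw [h0] at hFs; norm_num at hFs
    have hs1 : s ≠ 1 := by rintro rfl; rw [h1] at hFs; nlinarith
    have hs1' : (1 - s) ≠ 0 := sub_ne_zero.2 (Ne.symm hs1)
    set r : ℝ := s*b/(1-s) with hrdef
    have hr : r * (1-s) = s*b := by rw [hrdef]; field_simp
    have hFs' : (1-s^2)^2 - 4*b^2*s^2 - 4*c*s*(1-s)^2 = 0 := hFs
    have key : ((1+s)^2 - 4*r^2 - 4*s*c) * (1-s)^2 = 0 := by
      linear_combination hFs' - 4*(r*(1-s)+s*b)*hr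
    refine ⟨r, s, lt_of_le_of_ne hs.1 (Ne.symm hs0), hr, ?_⟩
    rcases mul_eq_zero.1 key with hk | hk
    · linarith
    · exact absurd hk (pow_ne_zero _ hs1')

private lemma repq_quad (b c : ℝ) (h : b^2 < 4*c) : RepQ (X^2 + C b * X + C c) := by
  obtain ⟨r, s, hs, k1, k2⟩ := exists_rs b c h
  have h4s : (4*s) ≠ 0 := by positivity
  refine ⟨C (1+s), 2*X - C (2*r), (4*s)⁻¹, by positivity, ?_⟩
  apply mul_left_cancel₀ (show (C (4*s) : ℝ[X]) ≠ 0 by simpa using h4s)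
  rw [← mul_assoc, ← C_mul, mul_inv_cancel₀ h4s, map_one, one_mul]
  have hC1 : (C (r*(1-s)) : ℝ[X]) = C (s*b) := by rw [k1]
  have hC2 : (C ((1+s)^2 - 4*r^2) : ℝ[X]) = C (4*s*c) := by rw [k2]
  simp only [map_add, map_mul, map_sub, map_pow, map_one, map_ofNat] at hC1 hC2 ⊢
  linear_combination (-4*X : ℝ[X])*hC1 - hC2

private lemma repq_all : ∀ (n : ℕ) (m : ℝ[X]), m.natDegree ≤ n → RepQ m := by
  intro n
  induction n using Nat.strong_induction_on with
  | _ n ih =>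
    intro m hm
    by_cases h0 : m.natDegree = 0
    · obtain ⟨a, rfl⟩ := natDegree_eq_zero.mp h0
      exact repq_C a
    · have hm0 : m ≠ 0 := fun h => h0 (by simp [h])
      have hdeg : 0 < (m.map (algebraMap ℝ ℂ)).degree := by
        rw [degree_map_eq_of_injective (algebraMap ℝ ℂ).injective]
        exact natDegree_pos_iff_degree_pos.mp (Nat.pos_of_ne_zero h0)
      obtain ⟨z, hz⟩ := Complex.exists_root hdeg
      have haev : aeval z m = 0 := by rwa [aeval_def, eval₂_eq_eval_map]
      rcases eq_or_ne z.im 0 with him | him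
      · have hroot : m.IsRoot z.re := by
          have hzre : z = (z.re : ℂ) := Complex.ext rfl (by simp [him])
          rw [hzre] at haev
          have := aeval_algebraMap_apply ℂ (z.re : ℝ) m
          simp only [Complex.coe_algebraMap] at this
          rw [this] at haev
          have h2 : (algebraMap ℝ ℂ) (aeval z.re m) = 0 := haev
          have h3 : aeval z.re m = 0 := (algebraMap ℝ ℂ).injective (by simpa using h2)
          simpa [IsRoot, ← aeval_def] using h3
        obtain ⟨k, hk⟩ := dvd_iff_isRoot.2 hroot
        have hk0 : k ≠ 0 := fun h => hm0 (by simp [hk, h])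
        have hdeg' : m.natDegree = 1 + k.natDegree := by
          rw [hk, natDegree_mul (X_sub_C_ne_zero _) hk0, natDegree_X_sub_C]
        have hrk : RepQ k := ih k.natDegree (by omega) k le_rfl
        rw [hk]
        exact repq_mul (repq_linear z.re) hrk
      · obtain ⟨k, hk⟩ := m.quadratic_dvd_of_aeval_eq_zero_im_ne_zero haev him
        have hqshape : X ^ 2 - C (2 * z.re) * X + C (‖z‖ ^ 2)
            = X^2 + C (-(2*z.re)) * X + C (‖z‖^2) := by
          rw [map_neg]; ring
        set q : ℝ[X] := X^2 + C (-(2*z.re)) * X + C (‖z‖^2) with hq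
        rw [hqshape] at hk
        have hqm : q.Monic := by
          rw [hq, add_assoc]
          exact monic_X_pow_add (lt_of_le_of_lt (degree_linear_le) (by norm_num))
        have hqn : q.natDegree = 2 := by
          rw [hq, show (X^2 : ℝ[X]) = C 1 * X^2 by rw [map_one, one_mul]]
          exact natDegree_quadratic one_ne_zero
        have hk0 : k ≠ 0 := fun h => hm0 (by simp [hk, h])
        have hdeg' : m.natDegree = 2 + k.natDegree := by
          rw [hk, natDegree_mul hqm.ne_zero hk0, hqn]
        have hrk : RepQ k := ih k.natDegree (by omega) k le_rfl
        have hbc : (-(2*z.re))^2 < 4*(‖z‖^2) := by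
          have h1 : ‖z‖^2 = z.re^2 + z.im^2 := by
            rw [Complex.sq_norm, Complex.normSq_apply]; ring
          have h2 : 0 < z.im^2 := by positivity
          nlinarith
        rw [hk]
        exact repq_mul (repq_quad _ _ hbc) hrk

/-- Every real polynomial is, up to a nonzero real constant, of the form
`x² + 2X x y - y²` for some `x, y ∈ ℝ[X]`. -/
theorem real_poly_rep (m : ℝ[X]) :
    ∃ (x y : ℝ[X]) (u : ℝ), u ≠ 0 ∧ m = C u * (x ^ 2 + 2 * X * x * y - y ^ 2) := by
  exact repq_all m.natDegree m le_rfl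
end

section
/- Let m and z₀ be integers with m | z₀² + z₀ + 5. Then there exist coprime integers x, y such that m = ±(x² + xy + 5y²); moreover since x² + xy + 5y² ≥ 0 is positive definite, if m > 0 then m = x² + xy + 5y². -/
/-- Reduction theory for discriminant -19: every form (a,b,c) with a > 0 and
b^2 - 4ac = -19 is properly equivalent to x^2+xy+5y^2. -/
private lemma key19 (n : ℕ) : ∀ a b c : ℤ, a.toNat = n → 0 < a → b^2 - 4*a*c = -19 →
    ∃ p q r s : ℤ, p*s - q*r = 1 ∧ ∀ X Y : ℤ,
      a*X^2 + b*X*Y + c*Y^2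
        = (p*X+q*Y)^2 + (p*X+q*Y)*(r*X+s*Y) + 5*(r*X+s*Y)^2 := by
  induction n using Nat.strong_induction_on with
  | _ n IH =>
  intro a b c hn ha hdisc
  have h2a : (0:ℤ) < 2*a := by linarith
  set t : ℤ := -((b + a) / (2*a)) with ht
  have hbt : b + 2*a*t = (b+a) % (2*a) - a := by
    rw [ht, Int.emod_def]; ring
  have hlb : -a ≤ b + 2*a*t := by
    have := Int.emod_nonneg (b+a) (ne_of_gt h2a)
    omega
  have hub : b + 2*a*t < a := by
    have := Int.emod_lt_of_pos (b+a) h2a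
    omega
  set b' : ℤ := b + 2*a*t with hb'
  set c' : ℤ := a*t^2 + b*t + c with hc'
  have hdisc' : b'^2 - 4*c'*a = -19 := by rw [hb', hc']; linear_combination hdisc
  have h4 : 0 < c'*a := by nlinarith [sq_nonneg b']
  have hc'pos : 0 < c' := by
    rcases mul_pos_iff.mp h4 with ⟨h, _⟩ | ⟨_, h⟩
    · exact h
    · linarith
  by_cases hca : c' < a
  · obtain ⟨p, q, r, s, hdet, H⟩ :=
      IH c'.toNat (by omega) c' (-b') a rfl hc'pos (by linear_combination hdisc')
    refine ⟨-q, p + q*t, -s, r + s*t, by linear_combination hdet, fun X Y => ?_⟩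
    have h1 := H Y (t*Y - X)
    rw [hb', hc'] at h1
    linear_combination h1
  · push_neg at hca
    have hb2 : b'^2 ≤ a^2 := by
      nlinarith [mul_nonneg (by linarith : (0:ℤ) ≤ a + b') (by linarith : (0:ℤ) ≤ a - b')]
    have hmul : a*a ≤ c'*a := mul_le_mul_of_nonneg_right hca ha.le
    have ha2 : a ≤ 2 := by nlinarith [sq_nonneg (a - 3)]
    have : a = 1 ∨ a = 2 := by omega
    rcases this with h1 | h1
    · subst h1
      have hb1 : b' = -1 := by
        rcases (by omega : b' = -1 ∨ b' = 0) with h | h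
        · exact h
        · rw [h] at hdisc'; norm_num at hdisc'; omega
      have hc5 : c' = 5 := by rw [hb1] at hdisc'; norm_num at hdisc'; omega
      have e1 : b + 2*t = -1 := by
        have := hb'; rw [hb1] at this; linarith
      have e2 : t^2 + b*t + c = 5 := by
        have := hc'; rw [hc5] at this; linarith
      refine ⟨1, -1 - t, 0, 1, by ring, fun X Y => ?_⟩
      linear_combination (X*Y - t*Y^2)*e1 + Y^2*e2
    · exfalso
      subst h1
      have h8 : b'^2 = 8*c' - 19 := by linarith
      rcases (by omega : b' = -2 ∨ b' = -1 ∨ b' = 0 ∨ b' = 1) with h|h|h|h <;>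
        rw [h] at h8 <;> norm_num at h8 <;> omega

/-- If `m ∣ z₀² + z₀ + 5`, then `m = ±(x² + xy + 5y²)` for coprime integers `x, y`;
and since the form is positive definite, if `m > 0` then `m = x² + xy + 5y²` with
`x, y` coprime. -/
theorem rep_disc_neg_19 (m z₀ : ℤ) (hdvd : m ∣ z₀ ^ 2 + z₀ + 5) :
    (∃ x y : ℤ, IsCoprime x y ∧
        (m = x ^ 2 + x * y + 5 * y ^ 2 ∨ m = -(x ^ 2 + x * y + 5 * y ^ 2))) ∧
      (0 < m → ∃ x y : ℤ, IsCoprime x y ∧ m = x ^ 2 + x * y + 5 * y ^ 2) := by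
  have hne : z₀ ^ 2 + z₀ + 5 ≠ 0 := by nlinarith [sq_nonneg (2*z₀ + 1)]
  have hm0 : m ≠ 0 := by rintro rfl; exact hne (zero_dvd_iff.mp hdvd)
  obtain ⟨k, hk⟩ := hdvd
  have main : ∀ M : ℤ, 0 < M → (M = m ∨ M = -m) →
      ∃ x y : ℤ, IsCoprime x y ∧ M = x^2 + x*y + 5*y^2 := by
    intro M hM hMm
    have hBC : ∃ B C : ℤ, B^2 - 4*M*C = -19 := by
      rcases hMm with h | h <;> subst h
      · exact ⟨2*z₀ + 1, k, by linear_combination 4*hk⟩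
      · exact ⟨-(2*z₀ + 1), -k, by linear_combination 4*hk⟩
    obtain ⟨B, C, hBC⟩ := hBC
    obtain ⟨p, q, r, s, hdet, H⟩ := key19 M.toNat M B C rfl hM hBC
    exact ⟨p, r, ⟨s, -q, by linear_combination hdet⟩, by linear_combination H 1 0⟩
  constructor
  · rcases lt_trichotomy m 0 with h | h | h
    · obtain ⟨x, y, hc, hx⟩ := main (-m) (by linarith) (Or.inr rfl)
      exact ⟨x, y, hc, Or.inr (by linarith)⟩
    · exact absurd h hm0
    · obtain ⟨x, y, hc, hx⟩ := main m h (Or.inl rfl)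
      exact ⟨x, y, hc, Or.inl hx⟩
  · intro h
    exact main m h (Or.inl rfl)
end

section
/- Let p be a prime with p ≡ 1 (mod 4) and let z₀ with 0 < z₀ < p satisfy z₀² + 1 ≡ 0 (mod p). Apply the Euclidean algorithm to p and z₀, and let r_{s−1}, r_s be the first two remainders less than √p. Then p = r_{s−1}² + r_s². -/
/-- The sequence of remainders in the Euclidean algorithm applied to `a` and `b`:
`r 0 = a`, `r 1 = b`, `r (k+2) = r k mod r (k+1)`. -/
def euclidSeq (a b : ℕ) : ℕ → ℕ
  | 0 => a
  | 1 => b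
  | k + 2 => euclidSeq a b k % euclidSeq a b (k + 1)

def brillT (a b : ℕ) : ℕ → ℕ
  | 0 => 0
  | 1 => 1
  | k + 2 => brillT a b k + (euclidSeq a b k / euclidSeq a b (k + 1)) * brillT a b (k + 1)

theorem euclid_key (a b : ℕ) : ∀ j, euclidSeq a b j * brillT a b (j+1) + euclidSeq a b (j+1) * brillT a b j = a := by
  intro j
  induction j with
  | zero => simp [euclidSeq, brillT]
  | succ i IH =>
      have hmod : euclidSeq a b (i+2) + (euclidSeq a b i / euclidSeq a b (i+1)) * euclidSeq a b (i+1) = euclidSeq a b i :=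
        Nat.mod_add_div' _ _
      have ht : brillT a b (i+2) = brillT a b i + (euclidSeq a b i / euclidSeq a b (i+1)) * brillT a b (i+1) := rfl
      calc euclidSeq a b (i+1) * brillT a b (i+2) + euclidSeq a b (i+2) * brillT a b (i+1)
          = (euclidSeq a b (i+2) + (euclidSeq a b i / euclidSeq a b (i+1)) * euclidSeq a b (i+1)) * brillT a b (i+1)
            + euclidSeq a b (i+1) * brillT a b i := by rw [ht]; ring
        _ = euclidSeq a b i * brillT a b (i+1) + euclidSeq a b (i+1) * brillT a b i := by rw [hmod]
        _ = a := IH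

theorem euclid_sign (a b : ℕ) (j : ℕ) :
    (a:ℤ) ∣ (euclidSeq a b j : ℤ) + (-1)^j * (brillT a b j : ℤ) * b := by
  induction j using Nat.twoStepInduction with
  | zero => simp [euclidSeq, brillT]
  | one => simp [euclidSeq, brillT]
  | more i IH1 IH2 =>
      have hmod : (euclidSeq a b (i+2) : ℤ)
          = (euclidSeq a b i : ℤ) - ((euclidSeq a b i / euclidSeq a b (i+1) : ℕ) : ℤ) * (euclidSeq a b (i+1) : ℤ) := by
        have hN : euclidSeq a b (i+2) + (euclidSeq a b i / euclidSeq a b (i+1)) * euclidSeq a b (i+1) = euclidSeq a b i :=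
          Nat.mod_add_div' _ _
        have hZ : (euclidSeq a b (i+2):ℤ) + ((euclidSeq a b i / euclidSeq a b (i+1) : ℕ):ℤ) * (euclidSeq a b (i+1):ℤ) = (euclidSeq a b i:ℤ) := by
          exact_mod_cast hN
        linarith
      have ht : (brillT a b (i+2) : ℤ) = (brillT a b i : ℤ)
          + ((euclidSeq a b i / euclidSeq a b (i+1) : ℕ) : ℤ) * (brillT a b (i+1) : ℤ) := by
        have h2 : brillT a b (i+2) = brillT a b i + (euclidSeq a b i / euclidSeq a b (i+1)) * brillT a b (i+1) := rfl
        exact_mod_cast h2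
      set q : ℤ := ((euclidSeq a b i / euclidSeq a b (i+1) : ℕ) : ℤ)
      have key : (euclidSeq a b (i+2) : ℤ) + (-1)^(i+2) * (brillT a b (i+2) : ℤ) * b
          = ((euclidSeq a b i : ℤ) + (-1)^i * (brillT a b i : ℤ) * b)
            - q * ((euclidSeq a b (i+1) : ℤ) + (-1)^(i+1) * (brillT a b (i+1) : ℤ) * b) := by
        rw [hmod, ht]; ring
      rw [key]
      exact dvd_sub IH1 (IH2.mul_left q)

theorem euclid_sq (a b : ℕ) (hb : (a:ℤ) ∣ (b:ℤ)^2 + 1) (j : ℕ) :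
    (a:ℤ) ∣ (euclidSeq a b j : ℤ)^2 + (brillT a b j : ℤ)^2 := by
  have h1 := euclid_sign a b j
  have h2 : (a:ℤ) ∣ ((euclidSeq a b j : ℤ) + (-1)^j * (brillT a b j : ℤ) * b)
      * ((euclidSeq a b j : ℤ) - (-1)^j * (brillT a b j : ℤ) * b) := h1.mul_right _
  have h3 : (a:ℤ) ∣ (brillT a b j : ℤ)^2 * ((b:ℤ)^2 + 1) := hb.mul_left _
  have key : (euclidSeq a b j : ℤ)^2 + (brillT a b j : ℤ)^2
      = ((euclidSeq a b j : ℤ) + (-1)^j * (brillT a b j : ℤ) * b)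
        * ((euclidSeq a b j : ℤ) - (-1)^j * (brillT a b j : ℤ) * b)
        + (brillT a b j : ℤ)^2 * ((b:ℤ)^2 + 1) := by
    obtain h | h := Nat.even_or_odd j
    · rw [Even.neg_one_pow h]; ring
    · rw [Odd.neg_one_pow h]; ring
  rw [key]
  exact dvd_add h2 h3

set_option maxHeartbeats 2000000 in
/-- Brillhart's refinement of Smith's construction: for a prime `p ≡ 1 (mod 4)` and
`z₀` with `0 < z₀ < p` and `p ∣ z₀² + 1`, if `r k` is the first remainder of the
Euclidean algorithm on `p` and `z₀` that is less than `√p`, then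
`p = (r k)² + (r (k+1))²`. -/
theorem brillhart (p : ℕ) (hp : p.Prime) (hp1 : p % 4 = 1)
    (z₀ : ℕ) (hz0 : 0 < z₀) (hzp : z₀ < p) (hdvd : p ∣ z₀ ^ 2 + 1)
    (k : ℕ) (hfirst : ∀ j < k, p ≤ (euclidSeq p z₀ j) ^ 2)
    (hk : (euclidSeq p z₀ k) ^ 2 < p) :
    p = (euclidSeq p z₀ k) ^ 2 + (euclidSeq p z₀ (k + 1)) ^ 2 := by
  have hp2 : 2 ≤ p := hp.two_le
  set r : ℕ → ℕ := euclidSeq p z₀ with hrdef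
  set t : ℕ → ℕ := brillT p z₀ with htdef
  -- k ≥ 1
  obtain ⟨n, rfl⟩ : ∃ n, k = n + 1 := by
    cases k with
    | zero =>
        exfalso
        have h0 : r 0 = p := rfl
        rw [h0] at hk
        have h9 : p ≤ p ^ 2 := Nat.le_self_pow (by norm_num) p
        omega
    | succ n => exact ⟨n, rfl⟩
  -- positivity of early remainders
  have hrpos : ∀ j, j ≤ n → 0 < r j := by
    intro j hj
    have := hfirst j (by omega)
    by_contra h
    push_neg at h
    interval_cases hj' : r j
    simp [hj'] at this
    omega
  -- strict decrease
  have hdec : ∀ j, j ≤ n → r (j + 1) < r j := by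
    intro j hj
    cases j with
    | zero => exact hzp
    | succ i =>
        have : r (i + 2) = r i % r (i + 1) := rfl
        rw [this]
        exact Nat.mod_lt _ (hrpos (i + 1) hj)
  -- t monotone / positive
  have htt : ∀ j, j + 1 ≤ n + 1 → 1 ≤ t (j + 1) ∧ t j ≤ t (j + 1) := by
    intro j hj
    induction j with
    | zero => exact ⟨le_refl 1, by norm_num [htdef, brillT]⟩
    | succ i IH =>
        obtain ⟨h1, _⟩ := IH (by omega)
        have hq : 1 ≤ r i / r (i + 1) :=
          (Nat.one_le_div_iff (hrpos (i + 1) (by omega))).mpr (le_of_lt (hdec i (by omega)))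
        have ht2 : t (i + 2) = t i + (r i / r (i + 1)) * t (i + 1) := rfl
        have hmul1 : 1 * 1 ≤ (r i / r (i + 1)) * t (i + 1) := Nat.mul_le_mul hq h1
        have hmul2 : 1 * t (i + 1) ≤ (r i / r (i + 1)) * t (i + 1) := Nat.mul_le_mul_right _ hq
        constructor
        · rw [ht2]; omega
        · rw [ht2]; omega
  have hid : ∀ j, r j * t (j + 1) + r (j + 1) * t j = p := euclid_key p z₀
  have hsq : ∀ j, (p : ℤ) ∣ (r j : ℤ) ^ 2 + (t j : ℤ) ^ 2 := by
    intro j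
    apply euclid_sq
    exact_mod_cast hdvd
  have hrn : p ≤ r n ^ 2 := hfirst n (by omega)
  have htk1 : 1 ≤ t (n + 1) := (htt n le_rfl).1
  have htn : t n ≤ t (n + 1) := (htt n le_rfl).2
  have hidn := hid n
  -- t (n+1) ^ 2 ≤ p
  have h1 : r n * t (n + 1) ≤ p := Nat.le.intro hidn
  have htk2 : t (n + 1) ^ 2 ≤ p := by
    have h2 : p * t (n + 1) ^ 2 ≤ p * p := by
      calc p * t (n + 1) ^ 2 ≤ r n ^ 2 * t (n + 1) ^ 2 := Nat.mul_le_mul_right _ hrn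
        _ = (r n * t (n + 1)) ^ 2 := by ring
        _ ≤ p ^ 2 := Nat.pow_le_pow_left h1 2
        _ = p * p := sq p
    exact Nat.le_of_mul_le_mul_left h2 (by omega)
  -- r (n+1) > 0
  have hrk_pos : 0 < r (n + 1) := by
    by_contra h
    push_neg at h
    have h0 : r (n + 1) = 0 := by omega
    have := hsq (n + 1)
    rw [h0] at this
    have hdt : p ∣ t (n + 1) ^ 2 := by
      have : (p : ℤ) ∣ ((t (n + 1) ^ 2 : ℕ) : ℤ) := by push_cast; simpa using this
      exact_mod_cast this
    have := hp.dvd_of_dvd_pow hdt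
    have hle := Nat.le_of_dvd (by omega) this
    have h10 : 2 * t (n + 1) ≤ t (n + 1) * t (n + 1) :=
      Nat.mul_le_mul_right _ (by omega : 2 ≤ t (n + 1))
    have h11 : t (n + 1) * t (n + 1) = t (n + 1) ^ 2 := (sq _).symm
    omega
  -- the first representation : r(n+1)^2 + t(n+1)^2 = p
  have hsum : r (n + 1) ^ 2 + t (n + 1) ^ 2 = p := by
    have hd : p ∣ r (n + 1) ^ 2 + t (n + 1) ^ 2 := by
      have := hsq (n + 1)
      have h2 : (p : ℤ) ∣ ((r (n + 1) ^ 2 + t (n + 1) ^ 2 : ℕ) : ℤ) := by push_cast; simpa using this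
      exact_mod_cast h2
    obtain ⟨c, hc⟩ := hd
    have hlt : r (n + 1) ^ 2 + t (n + 1) ^ 2 < 2 * p := by
      have := hk
      omega
    have hpos : 0 < r (n + 1) ^ 2 + t (n + 1) ^ 2 := by positivity
    match c, hc with
    | 0, hc => omega
    | 1, hc => omega
    | (c + 2), hc =>
        have h9 : 2 * p ≤ p * (c + 2) := by
          calc 2 * p = p * 2 := by ring
            _ ≤ p * (c + 2) := Nat.mul_le_mul_left p (by omega)
        linarith [hc, hlt, h9]
  have ha1 : 1 ≤ r (n + 1) := hrk_pos
  -- coprimality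
  have hcop : Nat.Coprime (r (n + 1)) (t (n + 1)) := by
    have hgp : Nat.gcd (r (n + 1)) (t (n + 1)) ∣ p := by
      rw [← hsum]
      exact dvd_add (dvd_pow (Nat.gcd_dvd_left _ _) two_ne_zero)
        (dvd_pow (Nat.gcd_dvd_right _ _) two_ne_zero)
    rcases (hp.eq_one_or_self_of_dvd _ hgp) with h | h
    · exact h
    · exfalso
      have hga : Nat.gcd (r (n + 1)) (t (n + 1)) ≤ r (n + 1) :=
        Nat.le_of_dvd hrk_pos (Nat.gcd_dvd_left _ _)
      have h9 : r (n + 1) ≤ r (n + 1) ^ 2 := Nat.le_self_pow (by norm_num) _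
      have : r (n + 1) < p := by omega
      omega
  -- move to ℤ
  have zsum : ((r (n+1):ℤ)) ^ 2 + ((t (n+1):ℤ)) ^ 2 = (p : ℤ) := by exact_mod_cast hsum
  have zid : (r (n+1):ℤ) * (t (n+2):ℤ) + (r (n+2):ℤ) * (t (n+1):ℤ) = (p : ℤ) := by
    exact_mod_cast hid (n + 1)
  have zRdef : (r (n+2):ℤ) + ((r n / r (n + 1) : ℕ) : ℤ) * (r (n+1):ℤ) = (r n:ℤ) := by
    have hN : r (n + 2) + (r n / r (n + 1)) * r (n + 1) = r n := Nat.mod_add_div' _ _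
    exact_mod_cast hN
  have zTdef : (t (n+2):ℤ) = (t n:ℤ) + ((r n / r (n + 1) : ℕ) : ℤ) * (t (n+1):ℤ) := by
    have h2 : t (n + 2) = t n + (r n / r (n + 1)) * t (n + 1) := rfl
    exact_mod_cast h2
  have zRlt : (r (n+2):ℤ) < (r (n+1):ℤ) := by
    have h3 : r (n + 2) < r (n + 1) := by
      have h2 : r (n + 2) = r n % r (n + 1) := rfl
      rw [h2]; exact Nat.mod_lt _ hrk_pos
    exact_mod_cast h3
  have zR0 : (0:ℤ) ≤ (r (n+2):ℤ) := Int.natCast_nonneg _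
  have zTn0 : (0:ℤ) ≤ (t n:ℤ) := Int.natCast_nonneg _
  have zQ0 : (0:ℤ) ≤ ((r n / r (n + 1) : ℕ) : ℤ) := Int.natCast_nonneg _
  have zA1 : (1:ℤ) ≤ (r (n+1):ℤ) := by exact_mod_cast ha1
  have zB1 : (1:ℤ) ≤ (t (n+1):ℤ) := by exact_mod_cast htk1
  have zTnB : (t n:ℤ) ≤ (t (n+1):ℤ) := by exact_mod_cast htn
  have zrn : (p : ℤ) ≤ (r n:ℤ) ^ 2 := by exact_mod_cast hrn
  have hcz : IsCoprime ((r (n+1):ℤ)) ((t (n+1):ℤ)) := by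
    rw [Int.isCoprime_iff_gcd_eq_one]
    simpa [Int.gcd_natCast_natCast] using hcop
  set A : ℤ := (r (n + 1) : ℤ) with hA
  set B : ℤ := (t (n + 1) : ℤ) with hB
  set R : ℤ := (r (n + 2) : ℤ) with hR
  set T : ℤ := (t (n + 2) : ℤ) with hT'
  set Rn : ℤ := (r n : ℤ) with hRn'
  set Tn : ℤ := (t n : ℤ) with hTn'
  set Q : ℤ := ((r n / r (n + 1) : ℕ) : ℤ) with hQ
  clear_value A B R T Rn Tn Q r t
  -- the key factorization
  have key : A * (T - A) = B * (B - R) := by linear_combination zid - zsum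
  have hAdvd : A ∣ (B - R) := by
    exact hcz.dvd_of_dvd_mul_left ⟨T - A, by linear_combination -key⟩
  obtain ⟨e, he⟩ := hAdvd
  have hTval : T = A + B * e := by
    have hA0 : A ≠ 0 := by omega
    have : A * (T - A) = A * (B * e) := by rw [key, he]; ring
    have := mul_left_cancel₀ hA0 this
    linarith
  rcases lt_trichotomy e 0 with he1 | he0 | he1
  · -- e ≤ -1 : R = B - A e ≥ B + A > A, contradiction
    exfalso
    have h9 : A ≤ A * (-e) := le_mul_of_one_le_right (by linarith) (by linarith)
    linarith [he, zRlt, zB1, h9]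
  · -- e = 0 : done
    have hRB : R = B := by rw [he0] at he; linarith
    have : r (n + 2) = t (n + 1) := by rw [hR, hB] at hRB; exact_mod_cast hRB
    rw [show n + 1 + 1 = n + 2 from rfl, this]
    omega
  · -- e ≥ 1 : contradiction
    exfalso
    have hRval : R = B - A * e := by linarith [he]
    -- A ≤ B
    have h4 : A * (A + B * e) + R * B = A ^ 2 + B ^ 2 := by
      rw [← hTval]; linarith [zid, zsum]
    have h5 : A * B * e + R * B = B ^ 2 := by linear_combination h4
    have hRB0 : 0 ≤ R * B := mul_nonneg zR0 (by linarith)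
    have hAeB : A * e ≤ B := by
      have h6 : (A * e) * B ≤ B * B := by linarith [h5]
      exact le_of_mul_le_mul_right h6 (by linarith)
    have hAe : A ≤ A * e := le_mul_of_one_le_right (by linarith) (by linarith)
    have hAB : A ≤ B := by linarith
    set m : ℤ := Q - e with hm
    have hRnval : Rn = B + m * A := by rw [hm]; rw [← zRdef, hRval]; ring
    have hTnval : Tn = A - m * B := by rw [hm]; have := zTdef; rw [hTval] at this; linarith [this]
    rcases lt_trichotomy m 0 with hm1 | hm0 | hm1
    · -- m ≤ -1 : Tn ≥ A + B > B ≥ Tn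
      have h9 : B ≤ (-m) * B := le_mul_of_one_le_left (by linarith) (by linarith)
      linarith [hTnval, zTnB, zA1, h9]
    · -- m = 0 : Rn = B, but Rn² ≥ p = A² + B²
      rw [hm0] at hRnval
      have hB2 : Rn ^ 2 = B ^ 2 := by rw [hRnval]; ring
      have hAA : 1 * 1 ≤ A * A := mul_le_mul zA1 zA1 (by norm_num) (by linarith)
      have hA2 : A ^ 2 = A * A := sq A
      linarith [zrn, zsum, hAA, hA2, hB2]
    · -- m ≥ 1 : B ≤ A, so A = B, p = 2A²
      have h9 : B ≤ m * B := le_mul_of_one_le_left (by linarith) (by linarith)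
      have hBA : B ≤ A := by linarith [hTnval, zTn0, h9]
      have hABeq : A = B := le_antisymm hAB hBA
      have h2p : (p : ℤ) = 2 * A ^ 2 := by rw [hABeq] at zsum; linarith
      have h2pn : p = 2 * r (n + 1) ^ 2 := by rw [hA] at h2p; exact_mod_cast h2p
      have h2d : (2 : ℕ) ∣ p := ⟨r (n + 1) ^ 2, h2pn⟩
      rcases hp.eq_one_or_self_of_dvd 2 h2d with h | h <;> omega
end
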